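/- arXiv:2505.11091 — 11 statements merged into one kernel-verified Lean document; each statement's English description precedes it below -/
import Mathlib

section
/- Let S be a submonoid of ℕ^d whose complement ℕ^d \ S is finite, with S ≠ ℕ^d. Then the minimal generating set of S has cardinality at least 2d. -/
private lemma multiset_sum_apply' {d : ℕ} (l : Multiset (Fin d → ℕ)) (j : Fin d) :
    l.sum j = (l.map (fun a => a j)).sum := by
  induction l using Multiset.induction_on with
  | empty => simp
  | cons a t ih => simp [ih]

private lemma mem_le_sum' {d : ℕ} {l : Multiset (Fin d → ℕ)} {a : Fin d → ℕ}
    (ha : a ∈ l) (j : Fin d) : a j ≤ l.sum j := by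
  rw [multiset_sum_apply']
  exact Multiset.single_le_sum (fun x _ => Nat.zero_le x) _ (Multiset.mem_map_of_mem _ ha)

private lemma exists_multiset_sum' {d : ℕ} {A : Set (Fin d → ℕ)} {x : Fin d → ℕ}
    (hx : x ∈ AddSubmonoid.closure A) :
    ∃ l : Multiset (Fin d → ℕ), (∀ a ∈ l, a ∈ A) ∧ l.sum = x := by
  induction hx using AddSubmonoid.closure_induction with
  | mem a ha => exact ⟨{a}, by simpa using ha, by simp⟩
  | zero => exact ⟨0, by simp, rfl⟩
  | add a b ha hb iha ihb =>
    obtain ⟨l1, h1, hs1⟩ := iha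
    obtain ⟨l2, h2, hs2⟩ := ihb
    refine ⟨l1 + l2, ?_, by simp [hs1, hs2]⟩
    intro c hc
    rcases Multiset.mem_add.mp hc with h|h
    exacts [h1 c h, h2 c h]

/-- A proper cofinite submonoid of ℕ^d has minimal generating set of
cardinality at least 2d. -/
theorem embedding_dimension_lower_bound
    (d : ℕ) (S : AddSubmonoid (Fin d → ℕ))
    (hfin : {x : Fin d → ℕ | x ∉ S}.Finite)
    (hproper : S ≠ ⊤)
    (A : Set (Fin d → ℕ))
    (hgen : AddSubmonoid.closure A = S)
    (hmin : ∀ B ⊂ A, AddSubmonoid.closure B ≠ S) :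
    2 * d ≤ A.ncard := by
  classical
  have hAS : ∀ a ∈ A, a ∈ S := fun a ha => by
    rw [← hgen]; exact AddSubmonoid.subset_closure ha
  -- 0 ∉ A
  have h0A : (0 : Fin d → ℕ) ∉ A := by
    intro h0
    refine hmin (A \ {0}) (Set.sdiff_singleton_ssubset.mpr h0) ?_
    refine le_antisymm ?_ ?_
    · rw [← hgen]; exact AddSubmonoid.closure_mono Set.diff_subset
    · rw [← hgen]
      refine AddSubmonoid.closure_le.mpr ?_
      intro a ha
      by_cases h : a = 0
      · rw [h]; exact zero_mem _
      · exact AddSubmonoid.subset_closure ⟨ha, h⟩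
  -- decomposition
  have hdecomp : ∀ x ∈ S, ∃ l : Multiset (Fin d → ℕ), (∀ a ∈ l, a ∈ A) ∧ l.sum = x := by
    intro x hx
    exact exists_multiset_sum' (by rw [hgen]; exact hx)
  -- a gap
  obtain ⟨h, hh⟩ : ∃ h, h ∉ S := by
    by_contra hc
    push_neg at hc
    exact hproper ((AddSubmonoid.eq_top_iff' S).mpr hc)
  -- conductor bound
  obtain ⟨b, hb1, hbig⟩ : ∃ b : Fin d → ℕ, (∀ i, 1 ≤ b i) ∧
      (∀ (x : Fin d → ℕ) (i : Fin d), b i ≤ x i → x ∈ S) := by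
    refine ⟨fun i => hfin.toFinset.sup (fun y => y i) + 1, fun i => Nat.le_add_left 1 _, ?_⟩
    intro x i hx
    by_contra hxS
    have hmem : x ∈ hfin.toFinset := hfin.mem_toFinset.mpr hxS
    have h2 : x i ≤ hfin.toFinset.sup (fun y => y i) := Finset.le_sup (f := fun y => y i) hmem
    replace hx : hfin.toFinset.sup (fun y => y i) + 1 ≤ x i := hx
    exact Nat.not_succ_le_self _ (hx.trans h2)
  -- indecomposability of elements of A
  have hindecA : ∀ a ∈ A, ∀ u v : Fin d → ℕ, u ∈ S → v ∈ S → u ≠ 0 → v ≠ 0 → u + v ≠ a := by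
    intro a ha u v hu hv hu0 hv0 huv
    obtain ⟨lu, hlu, hlus⟩ := hdecomp u hu
    obtain ⟨lv, hlv, hlvs⟩ := hdecomp v hv
    obtain ⟨ju, hju⟩ : ∃ j, u j ≠ 0 := Function.ne_iff.mp hu0
    obtain ⟨jv, hjv⟩ : ∃ j, v j ≠ 0 := Function.ne_iff.mp hv0
    have hmem : ∀ w ∈ lu + lv, w ∈ A \ {a} := by
      intro w hw
      rcases Multiset.mem_add.mp hw with hw | hw
      · refine ⟨hlu w hw, ?_⟩
        intro hwa
        have h1 : w jv ≤ u jv := hlus ▸ mem_le_sum' hw jv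
        have h2 : u jv + v jv = a jv := congrFun huv jv
        simp only [Set.mem_singleton_iff] at hwa
        rw [hwa] at h1
        omega
      · refine ⟨hlv w hw, ?_⟩
        intro hwa
        have h1 : w ju ≤ v ju := hlvs ▸ mem_le_sum' hw ju
        have h2 : u ju + v ju = a ju := congrFun huv ju
        simp only [Set.mem_singleton_iff] at hwa
        rw [hwa] at h1
        omega
    have haA : a ∈ AddSubmonoid.closure (A \ {a}) := by
      have : (lu + lv).sum ∈ AddSubmonoid.closure (A \ {a}) :=
        AddSubmonoid.multiset_sum_mem _ _ (fun w hw => AddSubmonoid.subset_closure (hmem w hw))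
      simpa [hlus, hlvs, huv] using this
    refine hmin (A \ {a}) (Set.sdiff_singleton_ssubset.mpr ha) ?_
    refine le_antisymm ?_ ?_
    · rw [← hgen]; exact AddSubmonoid.closure_mono Set.diff_subset
    · rw [← hgen]
      refine AddSubmonoid.closure_le.mpr ?_
      intro a' ha'
      by_cases h : a' = a
      · rw [h]; exact haA
      · exact AddSubmonoid.subset_closure ⟨ha', h⟩
  -- A is finite
  have hAfin : A.Finite := by
    refine Set.Finite.subset (Set.Finite.pi (fun i => Set.finite_Iio (2 * b i))) ?_
    intro a ha
    simp only [Set.mem_pi, Set.mem_univ, Set.mem_Iio, forall_true_left]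
    intro i
    by_contra hcon
    push_neg at hcon
    set u : Fin d → ℕ := Pi.single i (b i) with hudef
    set v : Fin d → ℕ := fun j => a j - u j with hvdef
    have hui : u i = b i := by simp [hudef]
    have huv : u + v = a := by
      funext j
      simp only [Pi.add_apply, hvdef]
      have : u j ≤ a j := by
        by_cases hji : j = i
        · subst hji; rw [hui]; omega
        · simp [hudef, Pi.single_apply, hji]
      omega
    have hvi : v i = a i - b i := by simp [hvdef, hui]
    refine hindecA a ha u v (hbig u i (by omega)) (hbig v i (by omega)) ?_ ?_ huv
    · intro h0; have h1 := congrFun h0 i; rw [hui] at h1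
      simp only [Pi.zero_apply] at h1; have := hb1 i; omega
    · intro h0; have h1 := congrFun h0 i; rw [hvi] at h1
      simp only [Pi.zero_apply] at h1; have := hb1 i; omega
  -- characterization of nonzero axis-supported vectors
  have haxis1 : ∀ (a : Fin d → ℕ) (i : Fin d), a ≠ 0 → (∀ j, j ≠ i → a j = 0) → 1 ≤ a i := by
    intro a i ha0 hz
    by_contra hc
    push_neg at hc
    apply ha0
    funext k
    by_cases hk : k = i
    · subst hk; simp only [Pi.zero_apply]; omega
    · simp [hz k hk]
  -- if e i ∈ S then e i ∈ A
  have heiA : ∀ i : Fin d, Pi.single i 1 ∈ S → Pi.single i 1 ∈ A := by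
    intro i hi
    obtain ⟨l, hl, hls⟩ := hdecomp _ hi
    have hlne : l ≠ 0 := by
      intro h0
      rw [h0] at hls
      have := congrFun hls i
      simp at this
    obtain ⟨a, ha⟩ := Multiset.exists_mem_of_ne_zero hlne
    have haA := hl a ha
    have hz : ∀ j, j ≠ i → a j = 0 := by
      intro j hj
      have h1 : a j ≤ (Pi.single i 1 : Fin d → ℕ) j := by rw [← hls]; exact mem_le_sum' ha j
      simpa [Pi.single_apply, hj] using h1
    have ha0 : a ≠ 0 := fun hq => h0A (hq ▸ haA)
    have h1 : 1 ≤ a i := haxis1 a i ha0 hz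
    have h2 : a i ≤ (Pi.single i 1 : Fin d → ℕ) i := by rw [← hls]; exact mem_le_sum' ha i
    rw [Pi.single_eq_same] at h2
    have heq : a = Pi.single i 1 := by
      funext k
      by_cases hk : k = i
      · subst hk; rw [Pi.single_eq_same]; omega
      · simp [Pi.single_apply, hk, hz k hk]
    exact heq ▸ haA
  -- two distinct axis generators when e i ∉ S
  have haxispair : ∀ i : Fin d, Pi.single i 1 ∉ S →
      ∃ x y : Fin d → ℕ, x ∈ A ∧ y ∈ A ∧ x ≠ y ∧
        (∀ j, j ≠ i → x j = 0) ∧ (∀ j, j ≠ i → y j = 0) := by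
    intro i hi
    have hbS : Pi.single i (b i) ∈ S := hbig _ i (by simp)
    obtain ⟨l, hl, hls⟩ := hdecomp _ hbS
    have hlne : l ≠ 0 := by
      intro h0
      rw [h0] at hls
      have h1 := congrFun hls i
      simp at h1
      have := hb1 i
      omega
    obtain ⟨a₀, ha₀l⟩ := Multiset.exists_mem_of_ne_zero hlne
    have ha₀A := hl a₀ ha₀l
    have hz₀ : ∀ j, j ≠ i → a₀ j = 0 := by
      intro j hj
      have h1 : a₀ j ≤ (Pi.single i (b i) : Fin d → ℕ) j := by rw [← hls]; exact mem_le_sum' ha₀l j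
      simpa [Pi.single_apply, hj] using h1
    by_contra hcon
    push_neg at hcon
    have hall : ∀ w ∈ A, (∀ j, j ≠ i → w j = 0) → w = a₀ := by
      intro w hwA hwz
      by_contra hne
      obtain ⟨j, hj, hj0⟩ := hcon a₀ w ha₀A hwA (fun hq => hne hq.symm) hz₀
      exact hj0 (hwz j hj)
    have ha₀0 : a₀ ≠ 0 := fun hq => h0A (hq ▸ ha₀A)
    have hm1 : 1 ≤ a₀ i := haxis1 a₀ i ha₀0 hz₀
    have hm2 : 2 ≤ a₀ i := by
      rcases Nat.lt_or_ge (a₀ i) 2 with hlt | hge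
      · exfalso
        have heq : a₀ = Pi.single i 1 := by
          funext k
          by_cases hk : k = i
          · subst hk; rw [Pi.single_eq_same]; omega
          · simp [Pi.single_apply, hk, hz₀ k hk]
        exact hi (heq ▸ hAS a₀ ha₀A)
      · exact hge
    have hdvd : ∀ n, Pi.single i n ∈ S → a₀ i ∣ n := by
      intro n hn
      obtain ⟨l', hl', hls'⟩ := hdecomp _ hn
      have hrep : ∀ w ∈ l', w = a₀ := by
        intro w hw
        refine hall w (hl' w hw) ?_
        intro j hj
        have h1 : w j ≤ (Pi.single i n : Fin d → ℕ) j := by rw [← hls']; exact mem_le_sum' hw j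
        simpa [Pi.single_apply, hj] using h1
      have h3 : l'.sum = (Multiset.card l') • a₀ := by
        conv_lhs => rw [Multiset.eq_replicate_card.mpr hrep]
        rw [Multiset.sum_replicate]
      have h5 := congrFun hls' i
      rw [h3] at h5
      simp only [Pi.smul_apply, smul_eq_mul, Pi.single_eq_same] at h5
      exact ⟨Multiset.card l', by rw [← h5, mul_comm]⟩
    have hinf : {x : Fin d → ℕ | x ∉ S}.Infinite := by
      refine Set.infinite_of_injective_forall_mem
        (f := fun n : ℕ => Pi.single i (n * a₀ i + 1)) ?_ ?_
      · intro n n' hnn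
        have h1 := congrFun hnn i
        simp only [Pi.single_eq_same] at h1
        have h2 : n * a₀ i = n' * a₀ i := by omega
        exact Nat.eq_of_mul_eq_mul_right (by omega) h2
      · intro n
        simp only [Set.mem_setOf_eq]
        intro hn
        have hd := hdvd _ hn
        have hd1 : a₀ i ∣ n * a₀ i := Dvd.intro_left n rfl
        have hd2 : a₀ i ∣ 1 := (Nat.dvd_add_right hd1).mp hd
        have := Nat.le_of_dvd one_pos hd2
        omega
    exact hinf hfin
  -- mixed generator when e i ∈ S
  have hmixed : ∀ i : Fin d, Pi.single i 1 ∈ S →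
      ∃ a, a ∈ A ∧ 1 ≤ a i ∧ (∀ j, Pi.single j 1 ∈ S → j ≠ i → a j = 0) ∧
        ∃ k, Pi.single k 1 ∉ S ∧ 1 ≤ a k := by
    intro i hi
    set z : Fin d → ℕ := fun j => if Pi.single j 1 ∈ S then 0 else h j with hzdef
    have hzS : z ∉ S := by
      intro hzmem
      apply hh
      have hw : (fun j => if Pi.single j 1 ∈ S then h j else 0) ∈ S := by
        have heq : (fun j => if Pi.single j 1 ∈ S then h j else 0) =
            ∑ j : Fin d, (Pi.single j (if Pi.single j 1 ∈ S then h j else 0) : Fin d → ℕ) := by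
          rw [Finset.univ_sum_single]
        rw [heq]
        refine AddSubmonoid.sum_mem _ fun j _ => ?_
        by_cases hj : Pi.single j 1 ∈ S
        · simp only [hj, if_true]
          have hsm : (Pi.single j (h j) : Fin d → ℕ) = h j • (Pi.single j 1 : Fin d → ℕ) := by
            funext k
            by_cases hk : k = j
            · subst hk; simp
            · simp [Pi.single_apply, hk]
          rw [hsm]
          exact AddSubmonoid.nsmul_mem _ hj _
        · simp only [hj, if_false]
          have : (Pi.single j 0 : Fin d → ℕ) = (0 : Fin d → ℕ) := by
            funext k; simp [Pi.single_apply]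
          rw [this]
          exact zero_mem _
      have heq2 : h = z + (fun j => if Pi.single j 1 ∈ S then h j else 0) := by
        funext j
        by_cases hj : Pi.single j 1 ∈ S <;> simp [hzdef, hj]
      rw [heq2]
      exact add_mem hzmem hw
    set yv : Fin d → ℕ := z + Pi.single i (b i) with hyvdef
    have hnS : yv ∈ S := by
      refine hbig _ i ?_
      simp only [hyvdef, Pi.add_apply, Pi.single_eq_same]
      exact Nat.le_add_left _ _
    obtain ⟨l, hl, hls⟩ := hdecomp _ hnS
    have hy : ∀ j, j ≠ i → yv j = z j := by
      intro j hj
      simp [hyvdef, Pi.single_apply, hj]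
    have hyI : ∀ j, Pi.single j 1 ∈ S → j ≠ i → yv j = 0 := by
      intro j hjS hj
      rw [hy j hj]
      simp [hzdef, hjS]
    by_contra hcon
    push_neg at hcon
    have hkey : ∀ w ∈ l, 1 ≤ w i → ∀ j, j ≠ i → w j = 0 := by
      intro w hw hwi j hj
      have hwA := hl w hw
      have hwle : ∀ j', w j' ≤ yv j' := fun j' => by
        rw [← hls]; exact mem_le_sum' hw j'
      have hIz : ∀ j', Pi.single j' 1 ∈ S → j' ≠ i → w j' = 0 := by
        intro j' hj'S hj'
        have h1 := hwle j'
        rw [hyI j' hj'S hj'] at h1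
        exact Nat.le_zero.mp h1
      by_cases hjS : Pi.single j 1 ∈ S
      · exact hIz j hjS hj
      · exact Nat.lt_one_iff.mp (hcon w hwA hwi hIz j hjS)
    set l' := l.filter (fun a => a i = 0) with hl'def
    have hl's : l'.sum = z := by
      funext j
      by_cases hj : j = i
      · subst hj
        have h1 : l'.sum j = 0 := by
          rw [multiset_sum_apply']
          refine Multiset.sum_eq_zero ?_
          intro c hc
          obtain ⟨w, hwl', hwc⟩ := Multiset.mem_map.mp hc
          have h2 := (Multiset.mem_filter.mp hwl').2
          rw [← hwc]
          exact h2
        rw [h1]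
        simp [hzdef, hi]
      · have hsplit : l.sum j = l'.sum j + (l.filter (fun a => ¬ a i = 0)).sum j := by
          conv_lhs => rw [← Multiset.filter_add_not (fun a => a i = 0) l]
          rw [Multiset.sum_add]
          simp [hl'def]
        have hzero : (l.filter (fun a => ¬ a i = 0)).sum j = 0 := by
          rw [multiset_sum_apply']
          refine Multiset.sum_eq_zero ?_
          intro c hc
          obtain ⟨w, hwl', hwc⟩ := Multiset.mem_map.mp hc
          have hwmem := Multiset.mem_filter.mp hwl'
          have h4 := hkey w hwmem.1 (Nat.one_le_iff_ne_zero.mpr (by simpa using hwmem.2)) j hj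
          rw [← hwc]
          exact h4
        have hlj : l.sum j = z j := by rw [hls]; exact hy j hj
        rw [hzero, add_zero] at hsplit
        rw [← hsplit]
        exact hlj
    apply hzS
    rw [← hl's]
    exact AddSubmonoid.multiset_sum_mem _ _
      (fun w hw => hAS w (hl w (Multiset.mem_of_mem_filter hw)))
  -- main selection
  have main : ∀ i : Fin d, ∃ x y : Fin d → ℕ, x ∈ A ∧ y ∈ A ∧ x ≠ y ∧
      (1 ≤ x i ∧ ((∀ j, j ≠ i → x j = 0) ∨
        (Pi.single i 1 ∈ S ∧ ∀ j, Pi.single j 1 ∈ S → j ≠ i → x j = 0))) ∧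
      (1 ≤ y i ∧ ((∀ j, j ≠ i → y j = 0) ∨
        (Pi.single i 1 ∈ S ∧ ∀ j, Pi.single j 1 ∈ S → j ≠ i → y j = 0))) := by
    intro i
    by_cases hi : Pi.single i 1 ∈ S
    · obtain ⟨a, haA, hai, haI, k, hkS, hak⟩ := hmixed i hi
      refine ⟨Pi.single i 1, a, heiA i hi, haA, ?_, ⟨by simp, Or.inl ?_⟩,
        ⟨hai, Or.inr ⟨hi, haI⟩⟩⟩
      · intro hxy
        have hki : k ≠ i := fun hk => hkS (hk ▸ hi)
        have h1 := congrFun hxy k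
        rw [Pi.single_apply] at h1
        simp [hki] at h1
        omega
      · intro j hj
        simp [Pi.single_apply, hj]
    · obtain ⟨x, y, hxA, hyA, hxy, hxz, hyz⟩ := haxispair i hi
      have hx0 : x ≠ 0 := fun hq => h0A (hq ▸ hxA)
      have hy0 : y ≠ 0 := fun hq => h0A (hq ▸ hyA)
      exact ⟨x, y, hxA, hyA, hxy, ⟨haxis1 x i hx0 hxz, Or.inl hxz⟩,
        ⟨haxis1 y i hy0 hyz, Or.inl hyz⟩⟩
  choose X Y hXA hYA hXY hGX hGY using main
  have hsep : ∀ (i i' : Fin d) (u u' : Fin d → ℕ), i ≠ i' →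
      (1 ≤ u i ∧ ((∀ j, j ≠ i → u j = 0) ∨
        (Pi.single i 1 ∈ S ∧ ∀ j, Pi.single j 1 ∈ S → j ≠ i → u j = 0))) →
      (1 ≤ u' i' ∧ ((∀ j, j ≠ i' → u' j = 0) ∨
        (Pi.single i' 1 ∈ S ∧ ∀ j, Pi.single j 1 ∈ S → j ≠ i' → u' j = 0))) →
      u ≠ u' := by
    rintro i i' u u' hne ⟨hu1, hu2⟩ ⟨hu'1, hu'2⟩ heq
    subst heq
    rcases hu2 with h2 | ⟨hSi, h2⟩
    · rw [h2 i' (Ne.symm hne)] at hu'1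
      omega
    · rcases hu'2 with h2' | ⟨hSi', h2'⟩
      · rw [h2' i hne] at hu1
        omega
      · rw [h2' i hSi hne] at hu1
        omega
  set g : Fin d × Bool → (Fin d → ℕ) := fun p => if p.2 then Y p.1 else X p.1 with hg
  have hginj : Function.Injective g := by
    rintro ⟨i, bo⟩ ⟨i', bo'⟩ hgg
    simp only [hg] at hgg
    have hii : i = i' := by
      by_contra hne
      cases bo <;> cases bo' <;>
        simp only [Bool.false_eq_true, if_false, if_true, ite_true, ite_false] at hgg
      · exact hsep i i' _ _ hne (hGX i) (hGX i') hgg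
      · exact hsep i i' _ _ hne (hGX i) (hGY i') hgg
      · exact hsep i i' _ _ hne (hGY i) (hGX i') hgg
      · exact hsep i i' _ _ hne (hGY i) (hGY i') hgg
    subst hii
    have hbb : bo = bo' := by
      cases bo <;> cases bo' <;>
        simp only [Bool.false_eq_true, if_false, if_true, ite_true, ite_false] at hgg
      · rfl
      · exact absurd hgg (hXY i)
      · exact absurd hgg.symm (hXY i)
      · rfl
    rw [hbb]
  have hsub : ↑(Finset.univ.image g) ⊆ A := by
    intro w hw
    simp only [Finset.coe_image, Set.mem_image, Finset.mem_coe, Finset.mem_univ] at hw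
    obtain ⟨⟨i, bo⟩, _, rfl⟩ := hw
    cases bo
    · simpa [hg] using hXA i
    · simpa [hg] using hYA i
  calc 2 * d = (Finset.univ.image g).card := by
        rw [Finset.card_image_of_injective _ hginj, Finset.card_univ, Fintype.card_prod,
          Fintype.card_fin, Fintype.card_bool]
        ring
    _ = (↑(Finset.univ.image g) : Set (Fin d → ℕ)).ncard := (Set.ncard_coe_finset _).symm
    _ ≤ A.ncard := Set.ncard_le_ncard hsub hAfin
end

section
/- Let S be a generalized numerical semigroup in ℕ^d with g = |ℕ^d \ S| gaps. Then S is symmetric (i.e., has exactly one pseudo-Frobenius element) if and only if there exists a gap f = (f_1,…,f_d) ∈ ℕ^d \ S such that 2g = (f_1+1)(f_2+1)⋯(f_d+1). -/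
/-- The set of pseudo-Frobenius elements of a submonoid of ℕ^d. -/
def PF {d : ℕ} (S : AddSubmonoid (Fin d → ℕ)) : Set (Fin d → ℕ) :=
  {h | h ∉ S ∧ ∀ s ∈ S, s ≠ 0 → h + s ∈ S}

/-- Every gap can be completed to a pseudo-Frobenius element. -/
lemma exists_pf_aux {d : ℕ} (S : AddSubmonoid (Fin d → ℕ))
    (hfin : {x : Fin d → ℕ | x ∉ S}.Finite)
    {x : Fin d → ℕ} (hx : x ∉ S) :
    ∃ s ∈ S, x + s ∈ PF S := by
  set T : Set (Fin d → ℕ) := {s | s ∈ S ∧ x + s ∉ S} with hT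
  have hTfin : T.Finite := by
    have hsub : T ⊆ (fun s => x + s) ⁻¹' {y | y ∉ S} := fun s hs => hs.2
    exact Set.Finite.subset (Set.Finite.preimage (add_right_injective x).injOn hfin) hsub
  have hT0 : (0 : Fin d → ℕ) ∈ T := ⟨S.zero_mem, by simpa using hx⟩
  obtain ⟨a, haT, hmax⟩ : ∃ a ∈ T, ∀ a' ∈ T, id a ≤ id a' → id a = id a' := by
    obtain ⟨a, haT, h⟩ := hTfin.exists_maximalFor id T ⟨0, hT0⟩
    exact ⟨a, haT, fun b hb hab => le_antisymm hab (h hb hab)⟩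
  refine ⟨a, haT.1, haT.2, ?_⟩
  intro s hs hs0
  by_contra hcon
  have hasT : a + s ∈ T := ⟨S.add_mem haT.1 hs, by rwa [add_assoc] at hcon⟩
  have hle : a ≤ a + s := le_add_of_nonneg_right zero_le
  have := hmax (a + s) hasT hle
  simp only [id_eq] at this
  exact hs0 (by simpa using (left_eq_add.mp this))

lemma ncard_Iic {d : ℕ} (f : Fin d → ℕ) :
    (Set.Iic f).ncard = ∏ i, (f i + 1) := by
  rw [← Finset.coe_Iic, Set.ncard_coe_finset, Pi.card_Iic]
  simp [Nat.card_Iic]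

/-- symmetry criterion via the number of gaps. -/
theorem symmetric_iff_gap_count
    (d : ℕ) (S : AddSubmonoid (Fin d → ℕ))
    (hfin : {x : Fin d → ℕ | x ∉ S}.Finite)
    (g : ℕ) (hg : g = {x : Fin d → ℕ | x ∉ S}.ncard) :
    (PF S).ncard = 1 ↔
      ∃ f : Fin d → ℕ, f ∉ S ∧ 2 * g = ∏ i : Fin d, (f i + 1) := by
  set H : Set (Fin d → ℕ) := {x | x ∉ S} with hH
  constructor
  · rintro h1
    obtain ⟨f, hPF⟩ := Set.ncard_eq_one.mp h1
    have hf : f ∈ PF S := by rw [hPF]; exact rfl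
    have hfS : f ∉ S := hf.1
    refine ⟨f, hfS, ?_⟩
    -- every gap h satisfies h ≤ f and f - h ∈ S
    have K1 : ∀ h ∈ H, h ≤ f ∧ f - h ∈ S := by
      intro h hh
      obtain ⟨s, hsS, hps⟩ := exists_pf_aux S hfin hh
      have : h + s = f := by
        have : h + s ∈ ({f} : Set _) := hPF ▸ hps
        simpa using this
      constructor
      · rw [← this]; exact le_add_of_nonneg_right zero_le
      · rw [← this, add_tsub_cancel_left]; exact hsS
    -- the image of the gaps under x ↦ f - x is Iic f ∩ S
    have himg : (fun x => f - x) '' H = Set.Iic f ∩ ↑S := by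
      ext y
      constructor
      · rintro ⟨h, hh, rfl⟩
        exact ⟨Set.mem_Iic.mpr tsub_le_self, (K1 h hh).2⟩
      · rintro ⟨hy1, hy2⟩
        refine ⟨f - y, ?_, tsub_tsub_cancel_of_le hy1⟩
        intro hcon
        have : (f - y) + y = f := tsub_add_cancel_of_le hy1
        exact hfS (this ▸ S.add_mem hcon hy2)
    have hinj : Set.InjOn (fun x => f - x) H := by
      intro x hx y hy hxy
      have hxf := (K1 x hx).1
      have hyf := (K1 y hy).1
      have hxy' : f - x = f - y := hxy
      calc x = f - (f - x) := (tsub_tsub_cancel_of_le hxf).symm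
        _ = f - (f - y) := by rw [hxy']
        _ = y := tsub_tsub_cancel_of_le hyf
    have hcard : (Set.Iic f ∩ ↑S).ncard = H.ncard := by
      rw [← himg, Set.ncard_image_of_injOn hinj]
    -- Iic f is the disjoint union of Iic f ∩ S and H
    have hsplit : Set.Iic f = (Set.Iic f ∩ ↑S) ∪ H := by
      ext x
      constructor
      · intro hx
        by_cases hxS : x ∈ S
        · exact Or.inl ⟨hx, hxS⟩
        · exact Or.inr hxS
      · rintro (⟨hx, _⟩ | hx)
        · exact hx
        · exact (K1 x hx).1
    have hdisj : Disjoint (Set.Iic f ∩ ↑S) H := by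
      rw [Set.disjoint_left]
      rintro x ⟨_, hxS⟩ hxH
      exact hxH hxS
    have hIfin : (Set.Iic f).Finite := Set.finite_Iic f
    have :=
      calc (∏ i, (f i + 1)) = (Set.Iic f).ncard := (ncard_Iic f).symm
        _ = (Set.Iic f ∩ ↑S).ncard + H.ncard := by
            conv_lhs => rw [hsplit]
            rw [Set.ncard_union_eq hdisj (hIfin.subset Set.inter_subset_left) hfin]
        _ = H.ncard + H.ncard := by rw [hcard]
        _ = 2 * g := by rw [hg]; ring
    omega
  · rintro ⟨f, hfS, heq⟩
    have hIfin : (Set.Iic f).Finite := Set.finite_Iic f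
    -- σ maps Iic f ∩ S injectively into Iic f ∩ H
    have hmaps : (fun x => f - x) '' (Set.Iic f ∩ ↑S) ⊆ Set.Iic f ∩ H := by
      rintro y ⟨x, ⟨hx1, hx2⟩, rfl⟩
      refine ⟨Set.mem_Iic.mpr tsub_le_self, ?_⟩
      intro hcon
      have : (f - x) + x = f := tsub_add_cancel_of_le hx1
      exact hfS (this ▸ S.add_mem hcon hx2)
    have hinj : Set.InjOn (fun x => f - x) (Set.Iic f ∩ ↑S) := by
      rintro x ⟨hx1, _⟩ y ⟨hy1, _⟩ hxy
      have hxy' : f - x = f - y := hxy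
      calc x = f - (f - x) := (tsub_tsub_cancel_of_le hx1).symm
        _ = f - (f - y) := by rw [hxy']
        _ = y := tsub_tsub_cancel_of_le hy1
    have hfinSH : (Set.Iic f ∩ H).Finite := hIfin.subset Set.inter_subset_left
    have hfinSS : (Set.Iic f ∩ ↑S).Finite := hIfin.subset Set.inter_subset_left
    have hle1 : (Set.Iic f ∩ ↑S).ncard ≤ (Set.Iic f ∩ H).ncard := by
      rw [← Set.ncard_image_of_injOn hinj]
      exact Set.ncard_le_ncard hmaps hfinSH
    have hle2 : (Set.Iic f ∩ H).ncard ≤ g := by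
      rw [hg]; exact Set.ncard_le_ncard Set.inter_subset_right hfin
    have hsplit : Set.Iic f = (Set.Iic f ∩ ↑S) ∪ (Set.Iic f ∩ H) := by
      ext x
      constructor
      · intro hx
        by_cases hxS : x ∈ S
        · exact Or.inl ⟨hx, hxS⟩
        · exact Or.inr ⟨hx, hxS⟩
      · rintro (⟨hx, _⟩ | ⟨hx, _⟩) <;> exact hx
    have hdisj : Disjoint (Set.Iic f ∩ ↑S) (Set.Iic f ∩ H) := by
      rw [Set.disjoint_left]
      rintro x ⟨_, hxS⟩ ⟨_, hxH⟩
      exact hxH hxS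
    have hsum : (Set.Iic f ∩ ↑S).ncard + (Set.Iic f ∩ H).ncard = 2 * g := by
      rw [← Set.ncard_union_eq hdisj hfinSS hfinSH, ← hsplit, ncard_Iic, ← heq]
    have hcardH : (Set.Iic f ∩ H).ncard = g := by omega
    have hcardS : (Set.Iic f ∩ ↑S).ncard = g := by omega
    -- all gaps lie in the box
    have hHsub : H = Set.Iic f ∩ H := by
      refine (Set.eq_of_subset_of_ncard_le Set.inter_subset_right ?_ hfin).symm
      rw [hcardH, hg]
    -- the image is all of Iic f ∩ H
    have himg : (fun x => f - x) '' (Set.Iic f ∩ ↑S) = Set.Iic f ∩ H := by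
      refine Set.eq_of_subset_of_ncard_le hmaps ?_ hfinSH
      rw [Set.ncard_image_of_injOn hinj, hcardH, hcardS]
    -- every gap h satisfies: ∃ x ∈ S, h + x = f
    have K : ∀ h ∈ H, ∃ x ∈ S, h + x = f := by
      intro h hh
      have : h ∈ (fun x => f - x) '' (Set.Iic f ∩ ↑S) := himg ▸ (hHsub ▸ hh : h ∈ Set.Iic f ∩ H)
      obtain ⟨x, ⟨hx1, hx2⟩, rfl⟩ := this
      exact ⟨x, hx2, tsub_add_cancel_of_le hx1⟩
    -- PF S = {f}
    have hfPF : f ∈ PF S := by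
      refine ⟨hfS, ?_⟩
      intro s hs hs0
      by_contra hcon
      have : f + s ∈ Set.Iic f ∩ H := hHsub ▸ (hcon : f + s ∈ H)
      have hle : f + s ≤ f := this.1
      exact hs0 (le_antisymm ((add_le_iff_nonpos_right f).mp hle) zero_le)
    have hPFeq : PF S = {f} := by
      ext p
      simp only [Set.mem_singleton_iff]
      constructor
      · rintro ⟨hpS, hp⟩
        obtain ⟨x, hxS, hxf⟩ := K p hpS
        by_cases hx0 : x = 0
        · rw [hx0, add_zero] at hxf; exact hxf
        · exact absurd (hxf ▸ hp x hxS hx0) hfS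
      · rintro rfl; exact hfPF
    rw [hPFeq, Set.ncard_singleton]
end

section
/- Let S ⊆ ℕ² be the submonoid generated by {(3,0), (a₂,0), (a₂+1,0), (0,1), (1,d₂)} where a₂ ≡ 1 (mod 3), a₂ > 3, gcd considerations make {3, a₂, a₂+1} a minimal generating set of a numerical semigroup T, and d₂ ≥ 1. Then the set of gaps of S equals {(h,j) : h ∈ H(T), h ≡ 1 mod 3, 0 ≤ j ≤ d₂−1} ∪ {(h,j) : h ∈ H(T), h ≡ 2 mod 3, 0 ≤ j ≤ 2d₂−1}, and S has a unique maximal gap, namely (a₂−2, 2d₂−1). -/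
/-- Maximal gaps of a submonoid of ℕ², w.r.t. the componentwise order. -/
def FA2 (S : AddSubmonoid (ℕ × ℕ)) : Set (ℕ × ℕ) :=
  {h | h ∉ S ∧ ∀ g, g ∉ S → h ≤ g → g = h}

/-- gap set and unique maximal gap of
S = ⟨(3,0),(a₂,0),(a₂+1,0),(0,1),(1,d₂)⟩ when a₂ ≡ 1 (mod 3). -/
theorem gaps_and_unique_maximal_gap
    (a₂ d₂ : ℕ) (ha : a₂ % 3 = 1) (ha3 : 3 < a₂) (hd : 1 ≤ d₂)
    (T : AddSubmonoid ℕ) (hT : T = AddSubmonoid.closure {3, a₂, a₂ + 1})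
    (hTmin : ∀ B ⊂ ({3, a₂, a₂ + 1} : Set ℕ), AddSubmonoid.closure B ≠ T)
    (S : AddSubmonoid (ℕ × ℕ))
    (hS : S = AddSubmonoid.closure {(3, 0), (a₂, 0), (a₂ + 1, 0), (0, 1), (1, d₂)}) :
    {p : ℕ × ℕ | p ∉ S} =
      {p : ℕ × ℕ | p.1 ∉ T ∧ p.1 % 3 = 1 ∧ p.2 ≤ d₂ - 1} ∪
      {p : ℕ × ℕ | p.1 ∉ T ∧ p.1 % 3 = 2 ∧ p.2 ≤ 2 * d₂ - 1} ∧
    FA2 S = {(a₂ - 2, 2 * d₂ - 1)} := by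
  -- multiples of 3 are in T
  have h3T : ∀ k : ℕ, 3 * k ∈ T := by
    intro k
    induction k with
    | zero => simpa using zero_mem T
    | succ n ih =>
        have h3 : (3 : ℕ) ∈ T := by
          rw [hT]; exact AddSubmonoid.subset_closure (by simp)
        have heq : 3 * (n + 1) = 3 * n + 3 := by ring
        rw [heq]
        exact add_mem ih h3
  -- characterization of membership in T
  have memT : ∀ n : ℕ, n ∈ T ↔ (n % 3 = 0 ∨ a₂ ≤ n) := by
    intro n
    constructor
    · intro h
      rw [hT] at h
      induction h using AddSubmonoid.closure_induction with
      | mem x hx =>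
          simp only [Set.mem_insert_iff, Set.mem_singleton_iff] at hx
          omega
      | zero => omega
      | add x y hx hy ihx ihy => omega
    · intro h
      have ha2T : a₂ ∈ T := by
        rw [hT]; exact AddSubmonoid.subset_closure (by simp)
      have ha2T' : a₂ + 1 ∈ T := by
        rw [hT]; exact AddSubmonoid.subset_closure (by simp)
      rcases Nat.lt_or_ge n a₂ with h' | h'
      · obtain ⟨k, rfl⟩ : ∃ k, n = 3 * k := ⟨n / 3, by omega⟩
        exact h3T k
      · rcases Nat.lt_trichotomy (n % 3) 1 with h1 | h1 | h1
        · obtain ⟨k, rfl⟩ : ∃ k, n = 3 * k := ⟨n / 3, by omega⟩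
          exact h3T k
        · obtain ⟨k, rfl⟩ : ∃ k, n = a₂ + 3 * k := ⟨(n - a₂) / 3, by omega⟩
          exact add_mem ha2T (h3T k)
        · obtain ⟨k, rfl⟩ : ∃ k, n = (a₂ + 1) + 3 * k := ⟨(n - a₂ - 1) / 3, by omega⟩
          exact add_mem ha2T' (h3T k)
  -- T embeds in S on the first coordinate
  have inlS : ∀ s : ℕ, s ∈ T → ((s, 0) : ℕ × ℕ) ∈ S := by
    intro s hs
    rw [hT] at hs
    induction hs using AddSubmonoid.closure_induction with
    | mem x hx =>
        rw [hS]
        apply AddSubmonoid.subset_closure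
        rcases hx with h | h | h <;> subst h <;> simp
    | zero => exact zero_mem S
    | add x y hx hy ihx ihy =>
        have : ((x + y, 0) : ℕ × ℕ) = (x, 0) + (y, 0) := by simp
        rw [this]; exact add_mem ihx ihy
  -- characterization of membership in S
  have memS : ∀ x y : ℕ, ((x, y) : ℕ × ℕ) ∈ S ↔
      ∃ t s, x = t + s ∧ s ∈ T ∧ t * d₂ ≤ y := by
    intro x y
    constructor
    · intro h
      rw [hS] at h
      have key : ∀ p : ℕ × ℕ,
          p ∈ AddSubmonoid.closure {((3 : ℕ), (0 : ℕ)), (a₂, 0), (a₂ + 1, 0), (0, 1), (1, d₂)} →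
          ∃ t s, p.1 = t + s ∧ s ∈ T ∧ t * d₂ ≤ p.2 := by
        intro p hp
        induction hp using AddSubmonoid.closure_induction with
        | mem q hq =>
            have h3' : (3 : ℕ) ∈ T := by rw [memT]; omega
            have ha2 : a₂ ∈ T := by rw [memT]; omega
            have ha2' : a₂ + 1 ∈ T := by rw [memT]; omega
            have h0 : (0 : ℕ) ∈ T := zero_mem T
            rcases hq with h | h | h | h | h <;> subst h
            · exact ⟨0, 3, by simp, h3', by simp⟩
            · exact ⟨0, a₂, by simp, ha2, by simp⟩
            · exact ⟨0, a₂ + 1, by simp, ha2', by simp⟩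
            · exact ⟨0, 0, by simp, h0, by simp⟩
            · exact ⟨1, 0, by simp, h0, by simp⟩
        | zero => exact ⟨0, 0, by simp, zero_mem T, by simp⟩
        | add q r hq hr ihq ihr =>
            obtain ⟨t1, s1, he1, hs1, hl1⟩ := ihq
            obtain ⟨t2, s2, he2, hs2, hl2⟩ := ihr
            refine ⟨t1 + t2, s1 + s2, ?_, add_mem hs1 hs2, ?_⟩
            · simp only [Prod.fst_add]; omega
            · simp only [Prod.snd_add]; nlinarith
      exact key (x, y) h
    · rintro ⟨t, s, rfl, hs, hl⟩
      have h1 : ((s, 0) : ℕ × ℕ) ∈ S := inlS s hs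
      have h2 : ((1, d₂) : ℕ × ℕ) ∈ S := by
        rw [hS]; exact AddSubmonoid.subset_closure (by simp)
      have h3 : ((0, 1) : ℕ × ℕ) ∈ S := by
        rw [hS]; exact AddSubmonoid.subset_closure (by simp)
      have heq : ((t + s, y) : ℕ × ℕ) = (s, 0) + t • ((1 : ℕ), d₂) + (y - t * d₂) • ((0 : ℕ), 1) := by
        simp [Prod.ext_iff, smul_eq_mul]
        omega
      rw [heq]
      exact add_mem (add_mem h1 (AddSubmonoid.nsmul_mem S h2 t)) (AddSubmonoid.nsmul_mem S h3 _)
  -- gap characterization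
  have gapchar : ∀ x y : ℕ, ((x, y) : ℕ × ℕ) ∉ S ↔
      ((x ∉ T ∧ x % 3 = 1 ∧ y ≤ d₂ - 1) ∨ (x ∉ T ∧ x % 3 = 2 ∧ y ≤ 2 * d₂ - 1)) := by
    intro x y
    constructor
    · intro h
      rw [memS] at h
      push_neg at h
      have h0 := h 0 x
      have h1 := h 1 (x - 1)
      have h2 := h 2 (x - 2)
      simp only [memT, not_and, not_le] at h0 h1 h2
      simp only [memT]
      omega
    · intro h hmem
      rw [memS] at hmem
      obtain ⟨t, s, he, hs, hl⟩ := hmem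
      rw [memT] at hs
      simp only [memT] at h
      match t with
      | 0 => omega
      | 1 => omega
      | (n + 2) =>
          have : 2 * d₂ ≤ (n + 2) * d₂ := by nlinarith
          omega
  -- every gap is below the maximal gap
  have le_max : ∀ p : ℕ × ℕ, p ∉ S → p ≤ (a₂ - 2, 2 * d₂ - 1) := by
    rintro ⟨x, y⟩ hp
    rw [gapchar] at hp
    simp only [memT, not_or, not_le] at hp
    rw [Prod.mk_le_mk]
    constructor <;> omega
  have hGnot : ((a₂ - 2, 2 * d₂ - 1) : ℕ × ℕ) ∉ S := by
    rw [gapchar]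
    right
    refine ⟨?_, by omega, le_refl _⟩
    rw [memT]; omega
  constructor
  · ext ⟨x, y⟩
    simp only [Set.mem_setOf_eq, Set.mem_union]
    exact gapchar x y
  · ext p
    simp only [FA2, Set.mem_setOf_eq, Set.mem_singleton_iff]
    constructor
    · rintro ⟨hp, hmax⟩
      exact (hmax _ hGnot (le_max p hp)).symm
    · rintro rfl
      exact ⟨hGnot, fun g hg hle => le_antisymm (le_max g hg) hle⟩
end

section
/- Let a₁, a₂, a₃ minimally generate a numerical semigroup T = ⟨a₁,a₂,a₃⟩ with F(T) − 1 ∉ T. Then F(T) − 2 ∈ T. -/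
private def Ep (M : ℕ → Prop) (a b c x y : ℕ) : Prop :=
  ∃ s, M s ∧ x * b + y * c = a + s

private lemma mem_closure_triple {a b c n : ℕ} :
    n ∈ AddSubmonoid.closure ({a, b, c} : Set ℕ) ↔
      ∃ p q r : ℕ, n = p * a + q * b + r * c := by
  constructor
  · intro h
    induction h using AddSubmonoid.closure_induction with
    | mem x hx =>
        rcases hx with rfl | rfl | rfl
        · exact ⟨1, 0, 0, by ring⟩
        · exact ⟨0, 1, 0, by ring⟩
        · exact ⟨0, 0, 1, by ring⟩
    | zero => exact ⟨0, 0, 0, by ring⟩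
    | add x y hx hy ihx ihy =>
        obtain ⟨p, q, r, rfl⟩ := ihx
        obtain ⟨p', q', r', rfl⟩ := ihy
        exact ⟨p + p', q + q', r + r', by ring⟩
  · rintro ⟨p, q, r, rfl⟩
    have ha : a ∈ AddSubmonoid.closure ({a, b, c} : Set ℕ) :=
      AddSubmonoid.subset_closure (by simp)
    have hb : b ∈ AddSubmonoid.closure ({a, b, c} : Set ℕ) :=
      AddSubmonoid.subset_closure (by simp)
    have hc : c ∈ AddSubmonoid.closure ({a, b, c} : Set ℕ) :=
      AddSubmonoid.subset_closure (by simp)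
    have h1 : p * a ∈ AddSubmonoid.closure ({a, b, c} : Set ℕ) := by
      simpa [nsmul_eq_mul] using AddSubmonoid.nsmul_mem _ ha p
    have h2 : q * b ∈ AddSubmonoid.closure ({a, b, c} : Set ℕ) := by
      simpa [nsmul_eq_mul] using AddSubmonoid.nsmul_mem _ hb q
    have h3 : r * c ∈ AddSubmonoid.closure ({a, b, c} : Set ℕ) := by
      simpa [nsmul_eq_mul] using AddSubmonoid.nsmul_mem _ hc r
    exact add_mem (add_mem h1 h2) h3

private lemma chicken {b c : ℕ} (hcop : Nat.Coprime b c) (hb : 0 < b) (hc : 0 < c)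
    {n : ℕ} (hn : b * c < n + b + c) : ∃ q r : ℕ, n = q * b + r * c := by
  haveI : NeZero c := ⟨hc.ne'⟩
  set q : ℕ := ((n : ZMod c) * (b : ZMod c)⁻¹).val with hqdef
  have hqlt : q < c := ZMod.val_lt _
  have hunit : IsUnit (b : ZMod c) := (ZMod.isUnit_iff_coprime b c).2 hcop
  have hqb : ((q * b : ℕ) : ZMod c) = (n : ZMod c) := by
    push_cast
    rw [hqdef]
    rw [ZMod.natCast_val, ZMod.cast_id]
    rw [mul_assoc, ZMod.inv_mul_of_unit _ hunit, mul_one]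
  have hmod : q * b ≡ n [MOD c] := (ZMod.natCast_eq_natCast_iff _ _ _).1 hqb
  have hqble : q * b ≤ n := by
    by_contra hgt
    push_neg at hgt
    have hdvd : c ∣ q * b - n := (Nat.modEq_iff_dvd' (le_of_lt hgt)).1 hmod.symm
    have hge : c ≤ q * b - n := Nat.le_of_dvd (by omega) hdvd
    have h1 : n + c ≤ q * b := by omega
    have h2 : (q + 1) * b ≤ c * b := Nat.mul_le_mul_right b (by omega)
    nlinarith
  have hdvd : c ∣ n - q * b := (Nat.modEq_iff_dvd' hqble).1 hmod
  obtain ⟨r, hr⟩ := hdvd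
  refine ⟨q, r, ?_⟩
  calc n = (n - q * b) + q * b := (Nat.sub_add_cancel hqble).symm
    _ = c * r + q * b := by rw [hr]
    _ = q * b + r * c := by ring

private lemma no_dom (M : ℕ → Prop) (a b c g g' X Y X' Y' : ℕ)
    (hmem : ∀ n, M n ↔ ∃ p q r : ℕ, n = p * a + q * b + r * c)
    (hg : ¬ M g) (hps : ∀ s, M s → s ≠ 0 → M (g' + s)) (hne : g ≠ g')
    (he : g + a = X * b + Y * c) (he' : g' + a = X' * b + Y' * c)
    (hX : X' ≤ X) (hY : Y' ≤ Y) (hb : 0 < b) : False := by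
  obtain ⟨dx, rfl⟩ : ∃ d, X = X' + d := ⟨X - X', by omega⟩
  obtain ⟨dy, rfl⟩ : ∃ d, Y = Y' + d := ⟨Y - Y', by omega⟩
  obtain ⟨w, hw⟩ : ∃ w, dx * b + dy * c = w := ⟨_, rfl⟩
  have hgg : g = g' + w := by
    have h1 : (g : ℤ) + a = (X' + dx) * b + (Y' + dy) * c := by exact_mod_cast he
    have h2 : (g' : ℤ) + a = X' * b + Y' * c := by exact_mod_cast he'
    have h3 : (g : ℤ) = g' + w := by
      have hwz : (w : ℤ) = dx * b + dy * c := by exact_mod_cast hw.symm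
      rw [hwz]; linear_combination h1 - h2
    exact_mod_cast h3
  rcases Nat.eq_zero_or_pos w with h0 | hpos
  · exact hne (by omega)
  · exact hg (hgg ▸ hps w ((hmem w).2 ⟨0, dx, dy, by rw [← hw]; ring⟩) (by omega))

private lemma Ep_up {M : ℕ → Prop} {a b c : ℕ}
    (hmem : ∀ n, M n ↔ ∃ p q r : ℕ, n = p * a + q * b + r * c)
    {x y x' y' : ℕ} (h : Ep M a b c x y) (hx : x ≤ x') (hy : y ≤ y') :
    Ep M a b c x' y' := by
  obtain ⟨s, hs, he⟩ := h
  obtain ⟨dx, rfl⟩ : ∃ d, x' = x + d := ⟨x' - x, by omega⟩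
  obtain ⟨dy, rfl⟩ : ∃ d, y' = y + d := ⟨y' - y, by omega⟩
  obtain ⟨p, q, r, rfl⟩ := (hmem s).1 hs
  refine ⟨p * a + (q + dx) * b + (r + dy) * c, (hmem _).2 ⟨p, q + dx, r + dy, rfl⟩, ?_⟩
  have h1 : (x + dx) * b + (y + dy) * c = (x * b + y * c) + (dx * b + dy * c) := by ring
  rw [h1, he]; ring

private lemma Ep_box {M : ℕ → Prop} {a b c : ℕ}
    (hmem : ∀ n, M n ↔ ∃ p q r : ℕ, n = p * a + q * b + r * c)
    {g X Y : ℕ} (hg : ¬ M g) (he : g + a = X * b + Y * c)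
    {x y : ℕ} (hx : x ≤ X) (hy : y ≤ Y) : ¬ Ep M a b c x y := by
  rintro ⟨s, hs, hxy⟩
  apply hg
  obtain ⟨dx, rfl⟩ : ∃ d, X = x + d := ⟨X - x, by omega⟩
  obtain ⟨dy, rfl⟩ : ∃ d, Y = y + d := ⟨Y - y, by omega⟩
  obtain ⟨p, q, r, rfl⟩ := (hmem s).1 hs
  have hgeq : g = p * a + (q + dx) * b + (r + dy) * c := by
    have h1 : (g : ℤ) + a = (x + dx) * b + (y + dy) * c := by exact_mod_cast he
    have h2 : (x : ℤ) * b + y * c = a + (p * a + q * b + r * c) := by exact_mod_cast hxy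
    have h3 : (g : ℤ) = p * a + (q + dx) * b + (r + dy) * c := by linear_combination h1 + h2
    exact_mod_cast h3
  exact hgeq ▸ (hmem _).2 ⟨p, q + dx, r + dy, rfl⟩

private lemma Ep_min {M : ℕ → Prop} {a b c : ℕ} (X Y : ℕ) (hE : Ep M a b c X Y) :
    ∃ x y, x ≤ X ∧ y ≤ Y ∧ Ep M a b c x y ∧
      ∀ x' y', x' ≤ X → y' ≤ Y → x' + y' < x + y → ¬ Ep M a b c x' y' := by
  classical
  have hex : ∃ n, ∃ x y, x ≤ X ∧ y ≤ Y ∧ x + y = n ∧ Ep M a b c x y :=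
    ⟨X + Y, X, Y, le_rfl, le_rfl, rfl, hE⟩
  obtain ⟨x, y, hx, hy, hsum, hE'⟩ := Nat.find_spec hex
  refine ⟨x, y, hx, hy, hE', ?_⟩
  intro x' y' hx' hy' hlt hE''
  exact Nat.find_min hex (by omega) ⟨x', y', hx', hy', rfl, hE''⟩

private lemma Ep_lattice {M : ℕ → Prop} {a b c : ℕ}
    (hmem : ∀ n, M n ↔ ∃ p q r : ℕ, n = p * a + q * b + r * c)
    {X Y x y : ℕ} (hx : x ≤ X) (hy : y ≤ Y) (hxy : Ep M a b c x y)
    (hmin : ∀ x' y', x' ≤ X → y' ≤ Y → x' + y' < x + y → ¬ Ep M a b c x' y')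
    (hx1 : 1 ≤ x) (hy1 : 1 ≤ y) :
    ∃ k, 1 ≤ k ∧ x * b + y * c = k * a := by
  obtain ⟨s, hs, he⟩ := hxy
  obtain ⟨p, q, r, rfl⟩ := (hmem s).1 hs
  have hq'x : min q x ≤ x := min_le_right _ _
  have hr'y : min r y ≤ y := min_le_right _ _
  have hq'q : min q x ≤ q := min_le_left _ _
  have hr'r : min r y ≤ r := min_le_left _ _
  have hE2 : Ep M a b c (x - min q x) (y - min r y) := by
    refine ⟨p * a + (q - min q x) * b + (r - min r y) * c,
      (hmem _).2 ⟨p, q - min q x, r - min r y, rfl⟩, ?_⟩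
    have h1 : (x : ℤ) * b + y * c = a + (p * a + q * b + r * c) := by exact_mod_cast he
    zify [hq'x, hr'y, hq'q, hr'r]
    linear_combination h1
  have h0 : min q x = 0 ∧ min r y = 0 := by
    by_contra hcon
    exact hmin (x - min q x) (y - min r y) (by omega) (by omega) (by omega) hE2
  have hq0 : q = 0 := by
    rcases Nat.min_eq_zero_iff.1 h0.1 with h | h
    · exact h
    · omega
  have hr0 : r = 0 := by
    rcases Nat.min_eq_zero_iff.1 h0.2 with h | h
    · exact h
    · omega
  refine ⟨p + 1, by omega, ?_⟩
  rw [he, hq0, hr0]; ring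

private lemma core (M : ℕ → Prop) (a b c : ℕ)
    (ha : 0 < a) (hab : a ≤ b) (hac : a ≤ c) (hcop : Nat.Coprime b c)
    (hmem : ∀ n, M n ↔ ∃ p q r : ℕ, n = p * a + q * b + r * c)
    (g₁ g₂ g₃ X₁ X₂ X₃ Y₁ Y₂ Y₃ : ℕ)
    (hg₁ : ¬ M g₁) (hg₂ : ¬ M g₂) (hg₃ : ¬ M g₃)
    (hps₂ : ∀ s, M s → s ≠ 0 → M (g₂ + s))
    (hps₃ : ∀ s, M s → s ≠ 0 → M (g₃ + s))
    (hne₁₂ : g₁ ≠ g₂) (hne₂₃ : g₂ ≠ g₃)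
    (he₁ : g₁ + a = X₁ * b + Y₁ * c)
    (he₂ : g₂ + a = X₂ * b + Y₂ * c)
    (he₃ : g₃ + a = X₃ * b + Y₃ * c)
    (hx₁₂ : X₂ < X₁) (hx₂₃ : X₃ < X₂) : False := by
  have hb : 0 < b := lt_of_lt_of_le ha hab
  have hc : 0 < c := lt_of_lt_of_le ha hac
  have hy₁₂ : Y₁ < Y₂ := by
    by_contra h
    exact no_dom M a b c g₁ g₂ X₁ Y₁ X₂ Y₂ hmem hg₁ hps₂ hne₁₂ he₁ he₂
      (le_of_lt hx₁₂) (by omega) hb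
  have hy₂₃ : Y₂ < Y₃ := by
    by_contra h
    exact no_dom M a b c g₂ g₃ X₂ Y₂ X₃ Y₃ hmem hg₂ hps₃ hne₂₃ he₂ he₃
      (le_of_lt hx₂₃) (by omega) hb
  -- join points
  have hj₁ : Ep M a b c X₁ Y₂ := by
    obtain ⟨d, rfl⟩ : ∃ d, X₁ = X₂ + d := ⟨X₁ - X₂, by omega⟩
    have hd : 1 ≤ d := by omega
    refine ⟨g₂ + d * b, hps₂ (d * b) ((hmem _).2 ⟨0, d, 0, by ring⟩)
      (Nat.mul_ne_zero (by omega) (by omega)), ?_⟩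
    have h1 : (X₂ + d) * b + Y₂ * c = (X₂ * b + Y₂ * c) + d * b := by ring
    rw [h1, ← he₂]; ring
  have hj₂ : Ep M a b c X₂ Y₃ := by
    obtain ⟨d, rfl⟩ : ∃ d, X₂ = X₃ + d := ⟨X₂ - X₃, by omega⟩
    have hd : 1 ≤ d := by omega
    refine ⟨g₃ + d * b, hps₃ (d * b) ((hmem _).2 ⟨0, d, 0, by ring⟩)
      (Nat.mul_ne_zero (by omega) (by omega)), ?_⟩
    have h1 : (X₃ + d) * b + Y₃ * c = (X₃ * b + Y₃ * c) + d * b := by ring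
    rw [h1, ← he₃]; ring
  -- first minimal point
  obtain ⟨x, y, hxX, hyY, hExy, hminxy⟩ := Ep_min X₁ Y₂ hj₁
  have hxgt : X₂ < x := by
    by_contra h
    exact Ep_box hmem hg₂ he₂ (by omega) (by omega) hExy
  have hygt : Y₁ < y := by
    by_contra h
    exact Ep_box hmem hg₁ he₁ (by omega) (by omega) hExy
  obtain ⟨k, hk1, hkeq⟩ := Ep_lattice hmem hxX hyY hExy hminxy (by omega) (by omega)
  -- second minimal point
  obtain ⟨x', y', hxX', hyY', hExy', hminxy'⟩ := Ep_min X₂ Y₃ hj₂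
  have hxgt' : X₃ < x' := by
    by_contra h
    exact Ep_box hmem hg₃ he₃ (by omega) (by omega) hExy'
  have hygt' : Y₂ < y' := by
    by_contra h
    exact Ep_box hmem hg₂ he₂ (by omega) (by omega) hExy'
  obtain ⟨k', hk1', hkeq'⟩ := Ep_lattice hmem hxX' hyY' hExy' hminxy' (by omega) (by omega)
  have hxx : x' < x := by omega
  have hyy : y < y' := by omega
  have hkz : (x : ℤ) * b + y * c = k * a := by exact_mod_cast hkeq
  have hkz' : (x' : ℤ) * b + y' * c = k' * a := by exact_mod_cast hkeq'
  rcases lt_trichotomy k' k with hlt | heq | hgt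
  · -- k' < k
    have hE0 : Ep M a b c (x - x') 0 := by
      refine ⟨(k - k' - 1) * a + (y' - y) * c,
        (hmem _).2 ⟨k - k' - 1, 0, y' - y, by ring⟩, ?_⟩
      zify [show x' ≤ x by omega, show y ≤ y' by omega,
        show k' ≤ k by omega, show 1 ≤ k - k' by omega]
      linear_combination hkz - hkz'
    have hEx : Ep M a b c (x - 1) y := Ep_up hmem hE0 (by omega) (by omega)
    exact hminxy (x - 1) y (by omega) (by omega) (by omega) hEx
  · -- k' = k
    subst heq
    have hnateq : (x - x') * b = (y' - y) * c := by
      zify [show x' ≤ x by omega, show y ≤ y' by omega]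
      linear_combination hkz - hkz'
    have hcd : c ∣ (x - x') :=
      (Nat.Coprime.dvd_of_dvd_mul_right hcop.symm ⟨y' - y, by rw [hnateq]; ring⟩)
    have hcx : c ≤ x - x' := Nat.le_of_dvd (by omega) hcd
    have hxc : c + 1 ≤ x := by omega
    have hka : (c + 1) * b + c ≤ k' * a := by
      rw [← hkeq]
      have h1 : (c + 1) * b ≤ x * b := Nat.mul_le_mul_right b hxc
      have h2 : 1 * c ≤ y * c := Nat.mul_le_mul_right c (by omega)
      linarith
    have hab2 : a + b ≤ k' * a := by
      have hcb : a * 1 ≤ c * b := Nat.mul_le_mul hac hb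
      linarith
    obtain ⟨s₀, hs₀⟩ : ∃ s₀, k' * a = a + b + s₀ := by
      refine ⟨k' * a - (a + b), ?_⟩
      have := Nat.add_sub_cancel' hab2
      obtain ⟨K, hK⟩ : ∃ K, k' * a = K := ⟨_, rfl⟩
      rw [hK] at this ⊢
      omega
    obtain ⟨q, r, hqr⟩ : ∃ q r : ℕ, s₀ = q * b + r * c := by
      apply chicken hcop hb hc
      rw [hs₀] at hka
      linarith
    have hfull : k' * a = a + b + (q * b + r * c) := by rw [hs₀, hqr]
    have hEx : Ep M a b c (x - 1) y := by
      refine ⟨q * b + r * c, (hmem _).2 ⟨0, q, r, by ring⟩, ?_⟩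
      have hfz : (k' : ℤ) * a = a + b + (q * b + r * c) := by exact_mod_cast hfull
      zify [show 1 ≤ x by omega]
      linear_combination hkz + hfz
    exact hminxy (x - 1) y (by omega) (by omega) (by omega) hEx
  · -- k < k'
    have hE0 : Ep M a b c 0 (y' - y) := by
      refine ⟨(k' - k - 1) * a + (x - x') * b,
        (hmem _).2 ⟨k' - k - 1, x - x', 0, by ring⟩, ?_⟩
      zify [show x' ≤ x by omega, show y ≤ y' by omega,
        show k ≤ k' by omega, show 1 ≤ k' - k by omega]
      linear_combination hkz' - hkz
    have hEy : Ep M a b c x' (y' - 1) := Ep_up hmem hE0 (by omega) (by omega)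
    exact hminxy' x' (y' - 1) (by omega) (by omega) (by omega) hEy

private lemma keylemma (M : ℕ → Prop) (a b c F : ℕ)
    (hmem : ∀ n, M n ↔ ∃ p q r : ℕ, n = p * a + q * b + r * c)
    (ha3 : 3 ≤ a) (hab : a ≤ b) (hac : a ≤ c)
    (hbig : ∀ n, F < n → M n) (hF3 : 3 ≤ F)
    (hg0 : ¬ M F) (hg1 : ¬ M (F - 1)) (hg2 : ¬ M (F - 2))
    (hno1 : ¬ M 1) (hno2 : ¬ M 2) : False := by
  have ha : 0 < a := by omega
  have hb : 0 < b := by omega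
  have hc : 0 < c := by omega
  -- pseudo-Frobenius property
  have hps : ∀ g, F ≤ g + 2 → ∀ s, M s → s ≠ 0 → M (g + s) := by
    intro g hgF s hMs hs0
    have hs1 : s ≠ 1 := fun h => hno1 (h ▸ hMs)
    have hs2 : s ≠ 2 := fun h => hno2 (h ▸ hMs)
    exact hbig _ (by omega)
  -- points
  have hpoint : ∀ g, ¬ M g → F ≤ g + 2 → ∃ X Y, g + a = X * b + Y * c := by
    intro g hg hgF
    have hgM : M (g + a) := hbig _ (by omega)
    obtain ⟨p, q, r, hpqr⟩ := (hmem _).1 hgM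
    rcases p with _ | p'
    · exact ⟨q, r, by simpa using hpqr⟩
    · exfalso
      apply hg
      refine (hmem g).2 ⟨p', q, r, ?_⟩
      have h2 : g + a = (p' * a + q * b + r * c) + a := by rw [hpqr]; ring
      exact Nat.add_right_cancel h2
  obtain ⟨x₁, y₁, he₁⟩ := hpoint F hg0 (by omega)
  obtain ⟨x₂, y₂, he₂⟩ := hpoint (F - 1) hg1 (by omega)
  obtain ⟨x₃, y₃, he₃⟩ := hpoint (F - 2) hg2 (by omega)
  -- coprimality
  have hcop : Nat.Coprime b c := by
    have hd1 : Nat.gcd b c ∣ F + a := he₁ ▸ dvd_add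
      (Dvd.dvd.mul_left (Nat.gcd_dvd_left b c) x₁)
      (Dvd.dvd.mul_left (Nat.gcd_dvd_right b c) y₁)
    have hd2 : Nat.gcd b c ∣ (F - 1) + a := he₂ ▸ dvd_add
      (Dvd.dvd.mul_left (Nat.gcd_dvd_left b c) x₂)
      (Dvd.dvd.mul_left (Nat.gcd_dvd_right b c) y₂)
    have hd3 : Nat.gcd b c ∣ (F + a) - ((F - 1) + a) := Nat.dvd_sub hd1 hd2
    have h4 : (F + a) - ((F - 1) + a) = 1 := by omega
    exact Nat.dvd_one.1 (h4 ▸ hd3)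
  -- the x coordinates are pairwise distinct
  have hne12 : x₁ ≠ x₂ := by
    intro h
    rcases le_total y₁ y₂ with hy | hy
    · exact no_dom M a b c (F - 1) F x₂ y₂ x₁ y₁ hmem hg1 (hps F (by omega))
        (by omega) he₂ he₁ (by omega) hy hb
    · exact no_dom M a b c F (F - 1) x₁ y₁ x₂ y₂ hmem hg0 (hps (F - 1) (by omega))
        (by omega) he₁ he₂ (by omega) hy hb
  have hne13 : x₁ ≠ x₃ := by
    intro h
    rcases le_total y₁ y₃ with hy | hy
    · exact no_dom M a b c (F - 2) F x₃ y₃ x₁ y₁ hmem hg2 (hps F (by omega))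
        (by omega) he₃ he₁ (by omega) hy hb
    · exact no_dom M a b c F (F - 2) x₁ y₁ x₃ y₃ hmem hg0 (hps (F - 2) (by omega))
        (by omega) he₁ he₃ (by omega) hy hb
  have hne23 : x₂ ≠ x₃ := by
    intro h
    rcases le_total y₂ y₃ with hy | hy
    · exact no_dom M a b c (F - 2) (F - 1) x₃ y₃ x₂ y₂ hmem hg2 (hps (F - 1) (by omega))
        (by omega) he₃ he₂ (by omega) hy hb
    · exact no_dom M a b c (F - 1) (F - 2) x₂ y₂ x₃ y₃ hmem hg1 (hps (F - 2) (by omega))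
        (by omega) he₂ he₃ (by omega) hy hb
  rcases Ne.lt_or_gt hne12 with h12 | h12 <;>
    rcases Ne.lt_or_gt hne13 with h13 | h13 <;>
      rcases Ne.lt_or_gt hne23 with h23 | h23
  · -- x₁ < x₂, x₁ < x₃, x₂ < x₃ : order x₃ > x₂ > x₁
    exact core M a b c ha hab hac hcop hmem (F - 2) (F - 1) F x₃ x₂ x₁ y₃ y₂ y₁
      hg2 hg1 hg0 (hps (F - 1) (by omega)) (hps F (by omega)) (by omega) (by omega)
      he₃ he₂ he₁ h23 h12
  · -- x₁ < x₂, x₁ < x₃, x₃ < x₂ : order x₂ > x₃ > x₁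
    exact core M a b c ha hab hac hcop hmem (F - 1) (F - 2) F x₂ x₃ x₁ y₂ y₃ y₁
      hg1 hg2 hg0 (hps (F - 2) (by omega)) (hps F (by omega)) (by omega) (by omega)
      he₂ he₃ he₁ h23 h13
  · -- x₁ < x₂, x₃ < x₁, x₂ < x₃ : impossible
    omega
  · -- x₁ < x₂, x₃ < x₁, x₃ < x₂ : order x₂ > x₁ > x₃
    exact core M a b c ha hab hac hcop hmem (F - 1) F (F - 2) x₂ x₁ x₃ y₂ y₁ y₃
      hg1 hg0 hg2 (hps F (by omega)) (hps (F - 2) (by omega)) (by omega) (by omega)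
      he₂ he₁ he₃ h12 h13
  · -- x₂ < x₁, x₁ < x₃, x₂ < x₃ : order x₃ > x₁ > x₂
    exact core M a b c ha hab hac hcop hmem (F - 2) F (F - 1) x₃ x₁ x₂ y₃ y₁ y₂
      hg2 hg0 hg1 (hps F (by omega)) (hps (F - 1) (by omega)) (by omega) (by omega)
      he₃ he₁ he₂ h13 h12
  · -- x₂ < x₁, x₁ < x₃, x₃ < x₂ : impossible
    omega
  · -- x₂ < x₁, x₃ < x₁, x₂ < x₃ : order x₁ > x₃ > x₂
    exact core M a b c ha hab hac hcop hmem F (F - 2) (F - 1) x₁ x₃ x₂ y₁ y₃ y₂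
      hg0 hg2 hg1 (hps (F - 2) (by omega)) (hps (F - 1) (by omega)) (by omega) (by omega)
      he₁ he₃ he₂ h13 h23
  · -- x₂ < x₁, x₃ < x₁, x₃ < x₂ : order x₁ > x₂ > x₃
    exact core M a b c ha hab hac hcop hmem F (F - 1) (F - 2) x₁ x₂ x₃ y₁ y₂ y₃
      hg0 hg1 hg2 (hps (F - 1) (by omega)) (hps (F - 2) (by omega)) (by omega) (by omega)
      he₁ he₂ he₃ h12 h23

/-- for a numerical semigroup T minimally generated by three elements,
if F(T) − 1 ∉ T then F(T) − 2 ∈ T. -/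
theorem frobenius_sub_two_mem
    (a₁ a₂ a₃ : ℕ)
    (T : AddSubmonoid ℕ) (hT : T = AddSubmonoid.closure {a₁, a₂, a₃})
    (hfin : {n : ℕ | n ∉ T}.Finite) (hproper : T ≠ ⊤)
    (hmin : ∀ B ⊂ ({a₁, a₂, a₃} : Set ℕ), AddSubmonoid.closure B ≠ T)
    (hcard : ({a₁, a₂, a₃} : Set ℕ).ncard = 3)
    (F : ℕ) (hF : F = sSup {n : ℕ | n ∉ T})
    (h1 : F - 1 ∉ T) :
    F - 2 ∈ T := by
  by_contra h2
  -- distinctness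
  have hd12 : a₁ ≠ a₂ := by
    rintro rfl
    have h : ({a₁, a₁, a₃} : Set ℕ) = {a₁, a₃} := by
      ext x; simp
    rw [h] at hcard
    have := Set.ncard_insert_le a₁ ({a₃} : Set ℕ)
    simp [Set.ncard_singleton] at this
    omega
  have hd13 : a₁ ≠ a₃ := by
    rintro rfl
    have h : ({a₁, a₂, a₁} : Set ℕ) = {a₁, a₂} := by
      ext x; simp; tauto
    rw [h] at hcard
    have := Set.ncard_insert_le a₁ ({a₂} : Set ℕ)
    simp [Set.ncard_singleton] at this
    omega
  have hd23 : a₂ ≠ a₃ := by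
    rintro rfl
    have h : ({a₁, a₂, a₂} : Set ℕ) = {a₁, a₂} := by
      ext x; simp
    rw [h] at hcard
    have := Set.ncard_insert_le a₁ ({a₂} : Set ℕ)
    simp [Set.ncard_singleton] at this
    omega
  -- membership characterization
  have hmem : ∀ n, n ∈ T ↔ ∃ p q r : ℕ, n = p * a₁ + q * a₂ + r * a₃ := by
    intro n; rw [hT]; exact mem_closure_triple
  -- generators are in T
  have haT1 : a₁ ∈ T := (hmem a₁).2 ⟨1, 0, 0, by ring⟩
  have haT2 : a₂ ∈ T := (hmem a₂).2 ⟨0, 1, 0, by ring⟩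
  have haT3 : a₃ ∈ T := (hmem a₃).2 ⟨0, 0, 1, by ring⟩
  -- basic facts about F
  have hne : Set.Nonempty {n : ℕ | n ∉ T} := by
    by_contra h
    apply hproper
    rw [Set.not_nonempty_iff_eq_empty] at h
    ext x
    simp only [AddSubmonoid.mem_top, iff_true]
    by_contra hx
    exact absurd (Set.eq_empty_iff_forall_notMem.1 h x hx) (by simp)
  have hFnot : F ∉ T := by
    have := Nat.sSup_mem hne hfin.bddAbove
    rw [← hF] at this
    exact this
  have hbig : ∀ n, F < n → n ∈ T := by
    intro n hn
    by_contra hnT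
    have : n ≤ sSup {n : ℕ | n ∉ T} := le_csSup hfin.bddAbove hnT
    omega
  have hF1 : 1 ≤ F := by
    rcases Nat.eq_zero_or_pos F with h | h
    · exact absurd (h ▸ zero_mem T) hFnot
    · exact h
  have hF3 : 3 ≤ F := by
    have e1 : F ≠ 1 := by intro h; apply h1; rw [h]; exact zero_mem T
    have e2 : F ≠ 2 := by intro h; apply h2; rw [h]; exact zero_mem T
    omega
  -- 1 and 2 are not in T
  have hno1 : (1 : ℕ) ∉ T := by
    intro h
    exact hFnot (by simpa [nsmul_eq_mul] using AddSubmonoid.nsmul_mem _ h F)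
  have hno2 : (2 : ℕ) ∉ T := by
    intro h
    have hmul : ∀ k : ℕ, k * 2 ∈ T := fun k => by
      simpa [nsmul_eq_mul] using AddSubmonoid.nsmul_mem _ h k
    rcases Nat.even_or_odd F with ⟨m, hm⟩ | ⟨m, hm⟩
    · exact hFnot (by have := hmul m; rwa [show m * 2 = F by omega] at this)
    · exact h1 (by have := hmul m; rwa [show m * 2 = F - 1 by omega] at this)
  -- generators are nonzero
  have hnz : ∀ x ∈ ({a₁, a₂, a₃} : Set ℕ), x ≠ 0 := by
    rintro x hx rfl
    have hsub : AddSubmonoid.closure (({a₁, a₂, a₃} : Set ℕ) \ {0}) = T := by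
      rw [hT]
      apply le_antisymm
      · exact AddSubmonoid.closure_mono (Set.diff_subset)
      · rw [AddSubmonoid.closure_le]
        intro z hz
        rcases Classical.em (z = 0) with rfl | hz0
        · exact zero_mem _
        · exact AddSubmonoid.subset_closure (by simp [hz0]; exact hz)
    apply hmin (({a₁, a₂, a₃} : Set ℕ) \ {0}) _ hsub
    constructor
    · exact Set.diff_subset
    · intro hsup
      have := hsup hx
      simp at this
  have h3a1 : 3 ≤ a₁ := by
    have h0 : a₁ ≠ 0 := hnz a₁ (by simp)
    have ha : a₁ ≠ 1 := fun h => hno1 (h ▸ haT1)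
    have hb : a₁ ≠ 2 := fun h => hno2 (h ▸ haT1)
    omega
  have h3a2 : 3 ≤ a₂ := by
    have h0 : a₂ ≠ 0 := hnz a₂ (by simp)
    have ha : a₂ ≠ 1 := fun h => hno1 (h ▸ haT2)
    have hb : a₂ ≠ 2 := fun h => hno2 (h ▸ haT2)
    omega
  have h3a3 : 3 ≤ a₃ := by
    have h0 : a₃ ≠ 0 := hnz a₃ (by simp)
    have ha : a₃ ≠ 1 := fun h => hno1 (h ▸ haT3)
    have hb : a₃ ≠ 2 := fun h => hno2 (h ▸ haT3)
    omega
  -- pivot: the least generator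
  set M : ℕ → Prop := fun n => n ∈ T with hM
  have hmem' : ∀ n, M n ↔ ∃ p q r : ℕ, n = p * a₁ + q * a₂ + r * a₃ := hmem
  rcases le_total a₁ a₂ with h12 | h12 <;> rcases le_total a₁ a₃ with h13 | h13 <;>
    rcases le_total a₂ a₃ with h23 | h23
  all_goals {
    first
    | exact keylemma M a₁ a₂ a₃ F hmem' h3a1 (by omega) (by omega)
        hbig hF3 hFnot h1 h2 hno1 hno2
    | exact keylemma M a₂ a₁ a₃ F
        (fun n => (hmem' n).trans
          ⟨fun ⟨p, q, r, h⟩ => ⟨q, p, r, by rw [h]; ring⟩,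
           fun ⟨p, q, r, h⟩ => ⟨q, p, r, by rw [h]; ring⟩⟩)
        h3a2 (by omega) (by omega) hbig hF3 hFnot h1 h2 hno1 hno2
    | exact keylemma M a₃ a₁ a₂ F
        (fun n => (hmem' n).trans
          ⟨fun ⟨p, q, r, h⟩ => ⟨r, p, q, by rw [h]; ring⟩,
           fun ⟨p, q, r, h⟩ => ⟨q, r, p, by rw [h]; ring⟩⟩)
        h3a3 (by omega) (by omega) hbig hF3 hFnot h1 h2 hno1 hno2
  }
end

section
/- Let d ≥ 2, let T = ⟨a₁,a₂,a₃⟩ be a numerical semigroup minimally generated by a₁,a₂,a₃ with F(T) − 1 ∈ T, let d₂,…,d_d ≥ 1, and let S ⊆ ℕ^d be generated by {a₁e₁, a₂e₁, a₃e₁, e₂,…,e_d} ∪ {e₁ + d_j e_j : 2 ≤ j ≤ d}. Then f = F(T)e₁ + Σ_{j≥2}(d_j − 1)e_j is a maximal gap of S with respect to the componentwise order. -/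
/-- Maximal gaps of a submonoid of ℕ^d, w.r.t. the componentwise order. -/
def FA {d : ℕ} (S : AddSubmonoid (Fin d → ℕ)) : Set (Fin d → ℕ) :=
  {h | h ∉ S ∧ ∀ g, g ∉ S → h ≤ g → g = h}

/-- F(T)e₁ + Σ_{j≥2}(d_j−1)e_j is a maximal gap of S. -/
theorem maximal_gap_first_class
    (d : ℕ) [NeZero d] (hd : 2 ≤ d)
    (a₁ a₂ a₃ : ℕ)
    (T : AddSubmonoid ℕ) (hT : T = AddSubmonoid.closure {a₁, a₂, a₃})
    (hTfin : {n : ℕ | n ∉ T}.Finite) (hTproper : T ≠ ⊤)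
    (hTmin : ∀ B ⊂ ({a₁, a₂, a₃} : Set ℕ), AddSubmonoid.closure B ≠ T)
    (hTcard : ({a₁, a₂, a₃} : Set ℕ).ncard = 3)
    (F : ℕ) (hF : F = sSup {n : ℕ | n ∉ T})
    (hF1 : F - 1 ∈ T)
    (dj : Fin d → ℕ) (hdj : ∀ j : Fin d, j ≠ 0 → 1 ≤ dj j)
    (S : AddSubmonoid (Fin d → ℕ))
    (hS : S = AddSubmonoid.closure
      ({Pi.single (0 : Fin d) a₁, Pi.single (0 : Fin d) a₂, Pi.single (0 : Fin d) a₃} ∪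
       {x | ∃ j : Fin d, j ≠ 0 ∧ x = Pi.single j 1} ∪
       {x | ∃ j : Fin d, j ≠ 0 ∧ x = Pi.single (0 : Fin d) 1 + Pi.single j (dj j)}))
    (f : Fin d → ℕ) (hf : f = fun i => if i = 0 then F else dj i - 1) :
    f ∈ FA S := by
  -- Basic facts about F
  have hne : {n : ℕ | n ∉ T}.Nonempty := by
    by_contra h
    rw [Set.not_nonempty_iff_eq_empty] at h
    apply hTproper
    ext n
    simp only [AddSubmonoid.mem_top, iff_true]
    by_contra hn
    have : n ∈ {n : ℕ | n ∉ T} := hn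
    rw [h] at this
    exact this
  have hFnotT : F ∉ T := by
    have := hne.csSup_mem hTfin
    rw [← hF] at this
    exact this
  have hgt : ∀ n, F < n → n ∈ T := by
    intro n hn
    by_contra hmem
    have : n ≤ F := by
      rw [hF]
      exact le_csSup hTfin.bddAbove hmem
    omega
  have hFpos : 1 ≤ F := by
    by_contra h
    have hF0 : F = 0 := by omega
    rw [hF0] at hF1 hFnotT
    exact hFnotT hF1
  -- Generators of T are in T
  have ha : ∀ a ∈ ({a₁, a₂, a₃} : Set ℕ), a ∈ T := by
    intro a haa
    rw [hT]
    exact AddSubmonoid.subset_closure haa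
  -- Membership of basic elements in S
  have hsingle0 : ∀ n ∈ T, Pi.single (0 : Fin d) n ∈ S := by
    intro n hn
    rw [hT] at hn
    induction hn using AddSubmonoid.closure_induction with
    | mem x hx =>
      rw [hS]
      apply AddSubmonoid.subset_closure
      rcases hx with h | h | h
      · subst h; exact Or.inl (Or.inl (Or.inl rfl))
      · subst h; exact Or.inl (Or.inl (Or.inr (Or.inl rfl)))
      · rw [Set.mem_singleton_iff] at h; subst h
        exact Or.inl (Or.inl (Or.inr (Or.inr rfl)))
    | zero => simpa using zero_mem S
    | add x y _ _ hx hy => rw [Pi.single_add]; exact add_mem hx hy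
  have hsinglej : ∀ j : Fin d, j ≠ 0 → ∀ n : ℕ, Pi.single j n ∈ S := by
    intro j hj n
    have h1 : Pi.single j (1 : ℕ) ∈ S := by
      rw [hS]
      exact AddSubmonoid.subset_closure (Or.inl (Or.inr ⟨j, hj, rfl⟩))
    have h2 : n • Pi.single j (1 : ℕ) ∈ S := AddSubmonoid.nsmul_mem S h1 n
    have h3 : n • Pi.single j (1 : ℕ) = (Pi.single j n : Fin d → ℕ) := by
      funext i
      by_cases hi : i = j
      · subst hi; simp
      · simp [Pi.single_eq_of_ne hi]
    rwa [h3] at h2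
  have hbase : ∀ x : Fin d → ℕ, x 0 ∈ T → x ∈ S := by
    intro x hx
    have hx2 : x = ∑ j : Fin d, Pi.single j (x j) := (Finset.univ_sum_single x).symm
    rw [hx2]
    refine AddSubmonoid.sum_mem S fun j _ => ?_
    by_cases hj : j = 0
    · subst hj; exact hsingle0 _ hx
    · exact hsinglej j hj _
  -- The avoiding submonoid S'
  let S' : AddSubmonoid (Fin d → ℕ) :=
    { carrier := {x | (∀ j : Fin d, j ≠ 0 → x j < dj j) → x 0 ∈ T}
      zero_mem' := fun _ => zero_mem T
      add_mem' := by
        intro x y hx hy h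
        have hx' : x 0 ∈ T := hx fun j hj =>
          lt_of_le_of_lt (Nat.le_add_right _ _) (h j hj)
        have hy' : y 0 ∈ T := hy fun j hj =>
          lt_of_le_of_lt (Nat.le_add_left _ _) (h j hj)
        exact add_mem hx' hy' }
  have hSS' : S ≤ S' := by
    rw [hS]
    rw [AddSubmonoid.closure_le]
    rintro x (((h | h | h) | ⟨j, hj, rfl⟩) | ⟨j, hj, rfl⟩)
    · intro _; rw [h]; simpa using ha a₁ (by simp)
    · intro _; rw [h]; simpa using ha a₂ (by simp)
    · intro _; rw [h]; simpa using ha a₃ (by simp)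
    · intro _
      show (Pi.single j (1 : ℕ) : Fin d → ℕ) 0 ∈ T
      rw [Pi.single_eq_of_ne (Ne.symm hj)]
      exact zero_mem T
    · intro hcond
      exfalso
      have := hcond j hj
      rw [Pi.add_apply, Pi.single_eq_of_ne hj, Pi.single_eq_same] at this
      omega
  constructor
  · -- f ∉ S
    intro hfS
    have hfS' : f ∈ S' := hSS' hfS
    have hcond : ∀ j : Fin d, j ≠ 0 → f j < dj j := by
      intro j hj
      have hfj : f j = dj j - 1 := by rw [hf]; simp [hj]
      rw [hfj]
      have := hdj j hj
      omega
    have : f 0 ∈ T := hfS' hcond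
    rw [hf] at this
    simp only [if_pos rfl] at this
    exact hFnotT this
  · -- maximality
    intro g hgS hle
    by_contra hne2
    apply hgS
    have hle' : ∀ i, f i ≤ g i := hle
    have hg0 : F ≤ g 0 := by
      have := hle' 0
      rw [hf] at this
      simpa using this
    rcases lt_or_eq_of_le hg0 with hlt | heq
    · exact hbase g (hgt _ hlt)
    · -- g 0 = F; find j with dj j ≤ g j
      have : ∃ j : Fin d, j ≠ 0 ∧ dj j ≤ g j := by
        by_contra hno
        push_neg at hno
        apply hne2
        funext i
        by_cases hi : i = 0
        · subst hi; rw [hf]; simpa using heq.symm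
        · have h1 := hle' i
          have h2 := hno i hi
          have h3 := hdj i hi
          have hfi : f i = dj i - 1 := by rw [hf]; simp [hi]
          rw [hfi] at h1 ⊢
          omega
      obtain ⟨j, hj, hdjg⟩ := this
      set gen : Fin d → ℕ := Pi.single (0 : Fin d) 1 + Pi.single j (dj j) with hgen_def
      have hgen : gen ∈ S := by
        rw [hS]
        exact AddSubmonoid.subset_closure (Or.inr ⟨j, hj, rfl⟩)
      set h : Fin d → ℕ := fun i => g i - gen i with hh_def
      have hgen0 : gen 0 = 1 := by
        show (Pi.single (0 : Fin d) 1 : Fin d → ℕ) 0 + (Pi.single j (dj j) : Fin d → ℕ) 0 = 1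
        rw [Pi.single_eq_same, Pi.single_eq_of_ne (Ne.symm hj)]
        omega
      have hgenj : gen j = dj j := by
        show (Pi.single (0 : Fin d) 1 : Fin d → ℕ) j + (Pi.single j (dj j) : Fin d → ℕ) j = dj j
        rw [Pi.single_eq_of_ne hj, Pi.single_eq_same]
        omega
      have hgeni : ∀ i, i ≠ 0 → i ≠ j → gen i = 0 := by
        intro i hi0 hij
        show (Pi.single (0 : Fin d) 1 : Fin d → ℕ) i + (Pi.single j (dj j) : Fin d → ℕ) i = 0
        rw [Pi.single_eq_of_ne hi0, Pi.single_eq_of_ne hij]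
        omega
      have hhS : h ∈ S := by
        apply hbase
        have hval : h 0 = F - 1 := by
          show g 0 - gen 0 = F - 1
          rw [hgen0]
          omega
        rw [hval]
        exact hF1
      have hgsum : g = gen + h := by
        funext i
        show g i = gen i + (g i - gen i)
        by_cases hi0 : i = 0
        · subst hi0; rw [hgen0]; omega
        · by_cases hij : i = j
          · subst hij; rw [hgenj]; omega
          · rw [hgeni i hi0 hij]; omega
      rw [hgsum]
      exact add_mem hgen hhS
end

section
/- Let d ≥ 3, let T = ⟨a₁,a₂,a₃⟩ be a numerical semigroup minimally generated by three elements, let d₂,…,d_d ≥ 1, and let S ⊆ ℕ^d be generated by {a₁e₁, a₂e₁, a₃e₁, e₂,…,e_d} ∪ {e₁ + d_j e_j : 2 ≤ j ≤ d}. Then S has at least two maximal gaps: |FA(S)| ≥ 2. -/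
open AddSubmonoid Finset in
lemma mem_S_iff {d : ℕ} [NeZero d] (a₁ a₂ a₃ : ℕ) (dj : Fin d → ℕ) (x : Fin d → ℕ) :
    x ∈ AddSubmonoid.closure
      ({Pi.single (0 : Fin d) a₁, Pi.single (0 : Fin d) a₂, Pi.single (0 : Fin d) a₃} ∪
       {x | ∃ j : Fin d, j ≠ 0 ∧ x = Pi.single j 1} ∪
       {x | ∃ j : Fin d, j ≠ 0 ∧ x = Pi.single (0 : Fin d) 1 + Pi.single j (dj j)}) ↔
    ∃ n : Fin d → ℕ, n 0 = 0 ∧ (∀ j, n j * dj j ≤ x j) ∧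
      ∃ t ∈ AddSubmonoid.closure ({a₁, a₂, a₃} : Set ℕ), x 0 = t + ∑ j, n j := by
  constructor
  · intro hx
    induction hx using AddSubmonoid.closure_induction with
    | mem y hy =>
      rcases hy with (hy | ⟨j, hj, rfl⟩) | ⟨j, hj, rfl⟩
      · refine ⟨0, rfl, by simp, ?_⟩
        rcases hy with rfl | rfl | rfl
        · exact ⟨a₁, subset_closure (by simp), by simp⟩
        · exact ⟨a₂, subset_closure (by simp), by simp⟩
        · exact ⟨a₃, subset_closure (by simp), by simp⟩
      · exact ⟨0, rfl, by simp, 0, zero_mem _, by simp [Pi.single_eq_of_ne (Ne.symm hj)]⟩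
      · refine ⟨Pi.single j 1, Pi.single_eq_of_ne (Ne.symm hj) _, ?_, 0, zero_mem _, ?_⟩
        · intro i
          rcases eq_or_ne i j with rfl | hij
          · simp [Pi.single_eq_of_ne hj]
          · simp [Pi.single_eq_of_ne hij]
        · simp [Pi.single_eq_of_ne (Ne.symm hj), Pi.single_apply]
    | zero => exact ⟨0, rfl, by simp, 0, zero_mem _, by simp⟩
    | add u v hu hv ihu ihv =>
      obtain ⟨n, hn0, hnle, t, htT, hsum⟩ := ihu
      obtain ⟨m, hm0, hmle, s, hsT, hsum'⟩ := ihv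
      refine ⟨n + m, by simp [hn0, hm0], fun j => ?_, t + s, add_mem htT hsT, ?_⟩
      · simpa [add_mul] using add_le_add (hnle j) (hmle j)
      · simp only [Pi.add_apply, hsum, hsum', Finset.sum_add_distrib]; ring
  · rintro ⟨n, hn0, hnle, t, htT, hsum⟩
    have key : x = Pi.single (0:Fin d) t
        + ∑ j : Fin d, n j • (Pi.single (0:Fin d) 1 + Pi.single j (dj j))
        + ∑ j : Fin d, (if j = 0 then 0 else x j - n j * dj j) • Pi.single j (1:ℕ) := by
      funext i
      simp only [Pi.add_apply, Finset.sum_apply, Pi.smul_apply, smul_eq_mul, Pi.single_apply]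
      rcases eq_or_ne i 0 with rfl | hi
      · have h2 : ∑ j : Fin d, n j * ((if (0:Fin d) = 0 then 1 else 0) +
            if (0:Fin d) = j then dj j else 0) = ∑ j : Fin d, n j := by
          refine Finset.sum_congr rfl fun j _ => ?_
          rcases eq_or_ne j 0 with rfl | hj
          · simp [hn0]
          · simp [Ne.symm hj]
        have h3 : ∑ j : Fin d, (if j = 0 then 0 else x j - n j * dj j) *
            (if (0:Fin d) = j then 1 else 0) = 0 := by
          refine Finset.sum_eq_zero fun j _ => ?_
          rcases eq_or_ne j 0 with rfl | hj
          · simp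
          · simp [Ne.symm hj, hj]
        rw [h2, h3, if_pos rfl]
        omega
      · have h2 : ∑ j : Fin d, n j * ((if i = 0 then 1 else 0) +
            if i = j then dj j else 0) = n i * dj i := by
          rw [Finset.sum_congr rfl (fun j _ => by rw [if_neg hi, zero_add, mul_ite, mul_zero]),
            Finset.sum_ite_eq]
          simp
        have h3 : ∑ j : Fin d, (if j = 0 then 0 else x j - n j * dj j) *
            (if i = j then 1 else 0) = x i - n i * dj i := by
          rw [Finset.sum_congr rfl (fun j _ => by rw [mul_ite, mul_one, mul_zero]),
            Finset.sum_ite_eq]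
          simp [hi]
        rw [h2, h3, if_neg hi]
        have := hnle i
        omega
    rw [key]
    refine add_mem (add_mem ?_ ?_) ?_
    · clear key hsum
      induction htT using AddSubmonoid.closure_induction with
      | mem y hy =>
        refine subset_closure (Set.mem_union_left _ (Set.mem_union_left _ ?_))
        rcases hy with rfl | rfl | rfl
        · exact Set.mem_insert _ _
        · exact Set.mem_insert_of_mem _ (Set.mem_insert _ _)
        · exact Set.mem_insert_of_mem _ (Set.mem_insert_of_mem _ rfl)
      | zero => rw [Pi.single_zero]; exact zero_mem _
      | add u v _ _ ihu ihv => rw [Pi.single_add]; exact add_mem ihu ihv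
    · refine sum_mem fun j _ => ?_
      rcases eq_or_ne j 0 with rfl | hj
      · rw [hn0, zero_smul]; exact zero_mem _
      · exact nsmul_mem (subset_closure (Set.mem_union_right _ (Set.mem_setOf.mpr ⟨j, hj, rfl⟩))) _
    · refine sum_mem fun j _ => ?_
      rcases eq_or_ne j 0 with rfl | hj
      · rw [if_pos rfl, zero_smul]; exact zero_mem _
      · exact nsmul_mem (subset_closure (Set.mem_union_left _
          (Set.mem_union_right _ (Set.mem_setOf.mpr ⟨j, hj, rfl⟩)))) _

open AddSubmonoid in
lemma redund (b c : ℕ) (hb : 3 ≤ b) (hc : 3 ≤ c) (hbc : b ≠ c) :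
    b ∈ AddSubmonoid.closure ({2, c} : Set ℕ) ∨ c ∈ AddSubmonoid.closure ({2, b} : Set ℕ) := by
  have hmem : ∀ u w : ℕ, (∃ m, u = 2 * m + w ∨ u = 2 * m) →
      u ∈ AddSubmonoid.closure ({2, w} : Set ℕ) := by
    rintro u w ⟨m, rfl | rfl⟩
    · have : 2 * m + w = m • 2 + w := by simp [smul_eq_mul]; ring
      rw [this]
      exact add_mem (nsmul_mem (subset_closure (by simp)) m) (subset_closure (by simp))
    · have : 2 * m = m • 2 := by simp [smul_eq_mul]; ring
      rw [this]
      exact nsmul_mem (subset_closure (by simp)) m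
  rcases Nat.even_or_odd b with ⟨m, hm⟩ | hob
  · exact Or.inl (hmem _ _ ⟨m, Or.inr (by omega)⟩)
  rcases Nat.even_or_odd c with ⟨m, hm⟩ | hoc
  · exact Or.inr (hmem _ _ ⟨m, Or.inr (by omega)⟩)
  obtain ⟨p, hp⟩ := hob
  obtain ⟨q, hq⟩ := hoc
  rcases lt_or_gt_of_ne hbc with h | h
  · exact Or.inr (hmem _ _ ⟨q - p, Or.inl (by omega)⟩)
  · exact Or.inl (hmem _ _ ⟨p - q, Or.inl (by omega)⟩)

open AddSubmonoid in
lemma no_min_with_two (b c : ℕ) (hb : 3 ≤ b) (hc : 3 ≤ c) (hbc : b ≠ c)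
    (hmin : ∀ B ⊂ ({2, b, c} : Set ℕ),
      AddSubmonoid.closure B ≠ AddSubmonoid.closure ({2, b, c} : Set ℕ)) : False := by
  rcases redund b c hb hc hbc with h | h
  · refine hmin {2, c} ?_ ?_
    · rw [Set.ssubset_iff_subset_ne]
      constructor
      · intro x hx; rcases hx with rfl | hx
        · exact Set.mem_insert _ _
        · exact Set.mem_insert_of_mem _ (Set.mem_insert_of_mem _ hx)
      · intro he
        have : b ∈ ({2, c} : Set ℕ) := he ▸ (by simp : b ∈ ({2,b,c}:Set ℕ))
        rcases this with h' | h'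
        · omega
        · simp at h'; omega
    · refine le_antisymm (closure_mono ?_) (closure_le.mpr ?_)
      · intro x hx; rcases hx with rfl | hx
        · exact Set.mem_insert _ _
        · exact Set.mem_insert_of_mem _ (Set.mem_insert_of_mem _ hx)
      · rintro x (rfl | rfl | hx)
        · exact subset_closure (by simp)
        · exact h
        · exact subset_closure (by simp [hx])
  · refine hmin {2, b} ?_ ?_
    · rw [Set.ssubset_iff_subset_ne]
      constructor
      · intro x hx; simp at hx ⊢; tauto
      · intro he
        have : c ∈ ({2, b} : Set ℕ) := he ▸ (by simp : c ∈ ({2,b,c}:Set ℕ))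
        rcases this with h' | h'
        · omega
        · simp at h'; omega
    · refine le_antisymm (closure_mono ?_) (closure_le.mpr ?_)
      · intro x hx; simp at hx ⊢; tauto
      · rintro x (rfl | rfl | hx)
        · exact subset_closure (by simp)
        · exact subset_closure (by simp)
        · simp at hx; subst hx; exact h

open AddSubmonoid in
lemma one_two_not_mem (a₁ a₂ a₃ : ℕ)
    (hproper : AddSubmonoid.closure ({a₁, a₂, a₃} : Set ℕ) ≠ ⊤)
    (hmin : ∀ B ⊂ ({a₁, a₂, a₃} : Set ℕ),
      AddSubmonoid.closure B ≠ AddSubmonoid.closure ({a₁, a₂, a₃} : Set ℕ))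
    (hcard : ({a₁, a₂, a₃} : Set ℕ).ncard = 3) :
    1 ∉ AddSubmonoid.closure ({a₁, a₂, a₃} : Set ℕ) ∧
    2 ∉ AddSubmonoid.closure ({a₁, a₂, a₃} : Set ℕ) := by
  have h1 : 1 ∉ AddSubmonoid.closure ({a₁, a₂, a₃} : Set ℕ) := by
    intro h1
    apply hproper
    rw [AddSubmonoid.eq_top_iff']
    intro n
    simpa using nsmul_mem h1 n
  refine ⟨h1, ?_⟩
  have pair_le : ∀ u v : ℕ, ({u, v} : Set ℕ).ncard ≤ 2 :=
    fun u v => le_trans (Set.ncard_insert_le _ _) (by simp)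
  have h12 : a₁ ≠ a₂ := by
    rintro rfl
    rw [Set.insert_idem] at hcard
    have := pair_le a₁ a₃; omega
  have h13 : a₁ ≠ a₃ := by
    rintro rfl
    have he : ({a₁, a₂, a₁} : Set ℕ) = {a₁, a₂} := by
      ext x; simp only [Set.mem_insert_iff, Set.mem_singleton_iff]; tauto
    rw [he] at hcard
    have := pair_le a₁ a₂; omega
  have h23 : a₂ ≠ a₃ := by
    rintro rfl
    have he : ({a₁, a₂, a₂} : Set ℕ) = {a₁, a₂} := by
      ext x; simp only [Set.mem_insert_iff, Set.mem_singleton_iff]; tauto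
    rw [he] at hcard
    have := pair_le a₁ a₂; omega
  have hge2 : ∀ a ∈ ({a₁, a₂, a₃} : Set ℕ), 2 ≤ a := by
    intro a ha
    rcases Nat.lt_or_ge a 2 with h | h
    · interval_cases a
      · exfalso
        refine hmin (({a₁, a₂, a₃} : Set ℕ) \ {0}) ?_ ?_
        · rw [Set.ssubset_iff_subset_ne]
          refine ⟨Set.diff_subset, fun he => ?_⟩
          have : (0 : ℕ) ∈ ({a₁, a₂, a₃} : Set ℕ) \ {0} := by rw [he]; exact ha
          exact this.2 rfl
        · refine le_antisymm (closure_mono Set.diff_subset) (closure_le.mpr ?_)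
          intro x hx
          rcases eq_or_ne x 0 with rfl | hx0
          · exact zero_mem _
          · exact subset_closure ⟨hx, hx0⟩
      · exact absurd (AddSubmonoid.subset_closure ha) h1
    · exact h
  intro h2m
  obtain ⟨l, hl, hlsum⟩ := AddSubmonoid.exists_multiset_of_mem_closure h2m
  have hlne : l ≠ 0 := by rintro rfl; simp at hlsum
  obtain ⟨y, hy⟩ := Multiset.exists_mem_of_ne_zero hlne
  have hsum2 : y + (l.erase y).sum = 2 := by
    rw [← Multiset.sum_cons, Multiset.cons_erase hy]; exact hlsum
  have hy2 : 2 ≤ y := hge2 y (hl y hy)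
  have hyeq : y = 2 := by omega
  subst hyeq
  have h2mem := hl 2 hy
  have b1 := hge2 a₁ (by simp)
  have b2 := hge2 a₂ (by simp)
  have b3 := hge2 a₃ (by simp)
  rcases h2mem with h' | h' | h'
  · rw [← h'] at hmin
    exact no_min_with_two a₂ a₃ (by omega) (by omega) h23 hmin
  · rw [← h'] at hmin
    have he : ({a₁, 2, a₃} : Set ℕ) = {2, a₁, a₃} := by
      ext x; simp only [Set.mem_insert_iff, Set.mem_singleton_iff]; tauto
    rw [he] at hmin
    exact no_min_with_two a₁ a₃ (by omega) (by omega) h13 hmin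
  · simp only [Set.mem_singleton_iff] at h'
    rw [← h'] at hmin
    have he : ({a₁, a₂, 2} : Set ℕ) = {2, a₁, a₂} := by
      ext x; simp only [Set.mem_insert_iff, Set.mem_singleton_iff]; tauto
    rw [he] at hmin
    exact no_min_with_two a₁ a₂ (by omega) (by omega) h12 hmin

/-- for d ≥ 3, this class of semigroups has at least two maximal gaps. -/
theorem at_least_two_maximal_gaps_first_class
    (d : ℕ) [NeZero d] (hd : 3 ≤ d)
    (a₁ a₂ a₃ : ℕ)
    (T : AddSubmonoid ℕ) (hT : T = AddSubmonoid.closure {a₁, a₂, a₃})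
    (hTfin : {n : ℕ | n ∉ T}.Finite) (hTproper : T ≠ ⊤)
    (hTmin : ∀ B ⊂ ({a₁, a₂, a₃} : Set ℕ), AddSubmonoid.closure B ≠ T)
    (hTcard : ({a₁, a₂, a₃} : Set ℕ).ncard = 3)
    (dj : Fin d → ℕ) (hdj : ∀ j : Fin d, j ≠ 0 → 1 ≤ dj j)
    (S : AddSubmonoid (Fin d → ℕ))
    (hS : S = AddSubmonoid.closure
      ({Pi.single (0 : Fin d) a₁, Pi.single (0 : Fin d) a₂, Pi.single (0 : Fin d) a₃} ∪
       {x | ∃ j : Fin d, j ≠ 0 ∧ x = Pi.single j 1} ∪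
       {x | ∃ j : Fin d, j ≠ 0 ∧ x = Pi.single (0 : Fin d) 1 + Pi.single j (dj j)})) :
    2 ≤ (FA S).ncard := by
  classical
  obtain ⟨h1T', h2T'⟩ := one_two_not_mem a₁ a₂ a₃ (hT ▸ hTproper) (fun B hB => hT ▸ hTmin B hB)
    hTcard
  have h1T : (1 : ℕ) ∉ T := hT ▸ h1T'
  have h2T : (2 : ℕ) ∉ T := hT ▸ h2T'
  have memS : ∀ x : Fin d → ℕ, x ∈ S ↔ ∃ n : Fin d → ℕ, n 0 = 0 ∧
      (∀ j, n j * dj j ≤ x j) ∧ ∃ t ∈ T, x 0 = t + ∑ j, n j := by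
    intro x
    rw [hS, hT, mem_S_iff]
  -- if x 0 ∈ T then x ∈ S
  have memS_of : ∀ x : Fin d → ℕ, x 0 ∈ T → x ∈ S := by
    intro x hx
    exact (memS x).mpr ⟨0, rfl, by simp, x 0, hx, by simp⟩
  -- Frobenius number
  have hne : hTfin.toFinset.Nonempty := by
    rw [Set.Finite.toFinset_nonempty]; exact ⟨1, h1T⟩
  set F := hTfin.toFinset.max' hne with hFdef
  have hFnT : F ∉ T := by
    have := hTfin.toFinset.max'_mem hne
    simpa using this
  have hFmax : ∀ n, n ∉ T → n ≤ F := fun n hn => Finset.le_max' _ n (by simpa using hn)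
  have hF1 : 1 ≤ F := hFmax 1 h1T
  -- the run of gaps below F
  have hex : ∃ k, F - (k + 1) ∈ T := by
    refine ⟨F, ?_⟩
    have h0 : F - (F + 1) = 0 := by omega
    rw [h0]; exact zero_mem T
  set k := Nat.find hex with hkdef
  have hkT : F - (k + 1) ∈ T := Nat.find_spec hex
  have hkgap : ∀ i ≤ k, F - i ∉ T := by
    intro i hi
    cases i with
    | zero => exact (Nat.sub_zero F) ▸ hFnT
    | succ i' => exact Nat.find_min hex (by omega)
  have hkF : k + 1 ≤ F := by
    have : k ≤ F - 1 := Nat.find_le (by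
      have h0 : F - (F - 1 + 1) = 0 := by omega
      rw [h0]; exact zero_mem T)
    omega
  -- coordinates
  have hd1 : (1 : ℕ) < d := by omega
  have hd2 : (2 : ℕ) < d := by omega
  set j1 : Fin d := ⟨1, hd1⟩ with hj1def
  set j2 : Fin d := ⟨2, hd2⟩ with hj2def
  have hj1 : j1 ≠ 0 := by simp [hj1def, Fin.ext_iff]
  have hj2 : j2 ≠ 0 := by simp [hj2def, Fin.ext_iff]
  have hj12 : j1 ≠ j2 := by simp [hj1def, hj2def, Fin.ext_iff]
  -- gaps of S are bounded
  have gap_bound : ∀ x : Fin d → ℕ, x ∉ S → x 0 ≤ F ∧ ∀ j, x j ≤ dj j * F + F := by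
    intro x hx
    have hx0 : x 0 ∉ T := fun h => hx (memS_of x h)
    have hx0F : x 0 ≤ F := hFmax _ hx0
    refine ⟨hx0F, fun j => ?_⟩
    rcases eq_or_ne j 0 with rfl | hj
    · omega
    by_contra hbig
    push_neg at hbig
    apply hx
    refine (memS x).mpr ⟨Pi.single j (x 0), Pi.single_eq_of_ne (Ne.symm hj) _, fun i => ?_,
      0, zero_mem _, ?_⟩
    · rcases eq_or_ne i j with rfl | hij
      · rw [Pi.single_eq_same]
        calc x 0 * dj i ≤ F * dj i := Nat.mul_le_mul_right _ hx0F
          _ = dj i * F := Nat.mul_comm _ _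
          _ ≤ dj i * F + F := Nat.le_add_right _ _
          _ ≤ x i := le_of_lt hbig
      · simp [Pi.single_eq_of_ne hij]
    · rw [Fintype.sum_pi_single']; omega
  have hGSfin : {x : Fin d → ℕ | x ∉ S}.Finite := by
    apply Set.Finite.subset (Set.Finite.pi (fun j => Set.finite_Iic (dj j * F + F)))
    intro x hx
    rw [Set.mem_pi]
    intro i _
    exact (gap_bound x hx).2 i
  -- every gap is below a maximal gap
  have exists_max : ∀ g : Fin d → ℕ, g ∉ S → ∃ m, m ∈ FA S ∧ g ≤ m := by
    intro g hg
    obtain ⟨m, hm, hmax⟩ := Set.Finite.exists_maximalFor id {x : Fin d → ℕ | x ∉ S ∧ g ≤ x}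
      (hGSfin.subset (fun x hx => hx.1)) ⟨g, hg, le_refl g⟩
    exact ⟨m, ⟨hm.1, fun y hy hle => le_antisymm (hmax ⟨hy, le_trans hm.2 hle⟩ hle) hle⟩, hm.2⟩
  -- the two gaps
  set g₁ : Fin d → ℕ := Pi.single 0 F + Pi.single j1 (k * dj j1) with hg₁def
  set g₂ : Fin d → ℕ := Pi.single 0 2 + Pi.single j2 (dj j2) with hg₂def
  have hg₁0 : g₁ 0 = F := by simp [hg₁def, Pi.single_eq_of_ne (Ne.symm hj1)]
  have hg₂0 : g₂ 0 = 2 := by simp [hg₂def, Pi.single_eq_of_ne (Ne.symm hj2)]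
  have hg₁j1 : g₁ j1 = k * dj j1 := by simp [hg₁def, Pi.single_eq_of_ne hj1]
  have hg₂j2 : g₂ j2 = dj j2 := by simp [hg₂def, Pi.single_eq_of_ne hj2]
  have hg₁nS : g₁ ∉ S := by
    intro hmem
    obtain ⟨n, hn0, hnle, t, htT, hsum⟩ := (memS g₁).mp hmem
    have hzero : ∀ j, j ≠ j1 → n j = 0 := by
      intro j hj
      rcases eq_or_ne j 0 with rfl | hjne
      · exact hn0
      · have hgj : g₁ j = 0 := by
          simp [hg₁def, Pi.single_eq_of_ne hjne, Pi.single_eq_of_ne hj]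
        rcases Nat.mul_eq_zero.mp (Nat.le_zero.mp (hgj ▸ hnle j)) with h | h
        · exact h
        · have := hdj j hjne; omega
    have hsum1 : ∑ j, n j = n j1 := Finset.sum_eq_single j1
      (fun j _ hj => hzero j hj) (fun h => absurd (Finset.mem_univ j1) h)
    have hnk : n j1 ≤ k := by
      have hle : n j1 * dj j1 ≤ k * dj j1 := hg₁j1 ▸ hnle j1
      exact Nat.le_of_mul_le_mul_right hle (hdj j1 hj1)
    rw [hg₁0, hsum1] at hsum
    have : F - n j1 ∉ T := hkgap (n j1) hnk
    have : t = F - n j1 := by omega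
    subst this
    exact ‹F - n j1 ∉ T› htT
  have hg₂nS : g₂ ∉ S := by
    intro hmem
    obtain ⟨n, hn0, hnle, t, htT, hsum⟩ := (memS g₂).mp hmem
    have hzero : ∀ j, j ≠ j2 → n j = 0 := by
      intro j hj
      rcases eq_or_ne j 0 with rfl | hjne
      · exact hn0
      · have hgj : g₂ j = 0 := by
          simp [hg₂def, Pi.single_eq_of_ne hjne, Pi.single_eq_of_ne hj]
        rcases Nat.mul_eq_zero.mp (Nat.le_zero.mp (hgj ▸ hnle j)) with h | h
        · exact h
        · have := hdj j hjne; omega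
    have hsum1 : ∑ j, n j = n j2 := Finset.sum_eq_single j2
      (fun j _ hj => hzero j hj) (fun h => absurd (Finset.mem_univ j2) h)
    have hnk : n j2 ≤ 1 := by
      have hle : n j2 * dj j2 ≤ 1 * dj j2 := by rw [one_mul]; exact hg₂j2 ▸ hnle j2
      exact Nat.le_of_mul_le_mul_right hle (hdj j2 hj2)
    rw [hg₂0, hsum1] at hsum
    rcases (by omega : n j2 = 0 ∨ n j2 = 1) with h | h
    · have ht2 : t = 2 := by omega
      exact h2T (ht2 ▸ htT)
    · have ht1 : t = 1 := by omega
      exact h1T (ht1 ▸ htT)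
  obtain ⟨m₁, hm₁FA, hm₁ge⟩ := exists_max g₁ hg₁nS
  obtain ⟨m₂, hm₂FA, hm₂ge⟩ := exists_max g₂ hg₂nS
  have hm12 : m₁ ≠ m₂ := by
    rintro rfl
    -- m₁ dominates both gaps, show m₁ ∈ S
    apply hm₁FA.1
    have hm0F : m₁ 0 = F := by
      have h0 : m₁ 0 ∉ T := fun h => hm₁FA.1 (memS_of _ h)
      have h1 : F ≤ m₁ 0 := hg₁0 ▸ hm₁ge 0
      exact le_antisymm (hFmax _ h0) h1
    refine (memS m₁).mpr ⟨Pi.single j1 k + Pi.single j2 1, ?_, fun j => ?_, F - (k + 1), hkT, ?_⟩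
    · simp [Pi.single_eq_of_ne (Ne.symm hj1), Pi.single_eq_of_ne (Ne.symm hj2)]
    · rcases eq_or_ne j j1 with rfl | hjj1
      · have hle : k * dj j1 ≤ m₁ j1 := hg₁j1 ▸ hm₁ge j1
        have e : (Pi.single j1 k + Pi.single j2 1 : Fin d → ℕ) j1 = k := by
          simp [Pi.single_eq_same, Pi.single_eq_of_ne hj12]
        rw [e]; exact hle
      rcases eq_or_ne j j2 with rfl | hjj2
      · have hle : dj j2 ≤ m₁ j2 := hg₂j2 ▸ hm₂ge j2
        have e : (Pi.single j1 k + Pi.single j2 1 : Fin d → ℕ) j2 = 1 := by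
          simp [Pi.single_eq_same, Pi.single_eq_of_ne (Ne.symm hj12)]
        rw [e, one_mul]; exact hle
      · simp [Pi.single_eq_of_ne hjj1, Pi.single_eq_of_ne hjj2]
    · have e : ∑ j, (Pi.single j1 k + Pi.single j2 1 : Fin d → ℕ) j = k + 1 := by
        simp only [Pi.add_apply]
        rw [Finset.sum_add_distrib, Fintype.sum_pi_single', Fintype.sum_pi_single']
      rw [e, hm0F]
      omega
  have hFAfin : (FA S).Finite := hGSfin.subset (fun x hx => hx.1)
  calc (2 : ℕ) = ({m₁, m₂} : Set (Fin d → ℕ)).ncard := (Set.ncard_pair hm12).symm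
    _ ≤ (FA S).ncard := by
        apply Set.ncard_le_ncard _ hFAfin
        rintro x (rfl | rfl)
        · exact hm₁FA
        · exact hm₂FA
end

section
/- Let S = ⟨(a₁,0),(a₂,0),(0,b₁),(0,b₂),(1,1)⟩ ⊆ ℕ² with gcd(a₁,a₂) = 1 and gcd(b₁,b₂) = 1, minimally generated by these five elements. Then S has at least two maximal gaps with respect to the componentwise order. -/
open AddSubmonoid

lemma ncard_le_four' (x y z w : ℕ × ℕ) : ({x, y, z, w} : Set (ℕ × ℕ)).ncard ≤ 4 := by
  have h1 := Set.ncard_insert_le x ({y, z, w} : Set (ℕ × ℕ))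
  have h2 := Set.ncard_insert_le y ({z, w} : Set (ℕ × ℕ))
  have h3 := Set.ncard_insert_le z ({w} : Set (ℕ × ℕ))
  have h4 : ({w} : Set (ℕ × ℕ)).ncard = 1 := Set.ncard_singleton w
  omega

lemma one_notmem_pair {a b : ℕ} (ha : 2 ≤ a) (hb : 2 ≤ b) :
    (1 : ℕ) ∉ AddSubmonoid.closure ({a, b} : Set ℕ) := by
  rw [AddSubmonoid.mem_closure_pair]
  rintro ⟨u, v, h⟩
  simp only [smul_eq_mul] at h
  rcases Nat.eq_zero_or_pos u with hu | hu
  · rcases Nat.eq_zero_or_pos v with hv | hv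
    · rw [hu, hv] at h; simp at h
    · rw [hu] at h
      simp only [Nat.zero_mul, Nat.zero_add] at h
      have h2 : 1 * 2 ≤ v * b := Nat.mul_le_mul hv hb
      omega
  · have h2 : 1 * 2 ≤ u * a := Nat.mul_le_mul hu ha
    omega

lemma mem_pair_of_big {a b : ℕ} (ha : 2 ≤ a) (hb : 2 ≤ b) (cop : Nat.Coprime a b)
    {n : ℕ} (hn : a * b ≤ n) : n ∈ AddSubmonoid.closure ({a, b} : Set ℕ) := by
  by_contra h
  have h2 := (frobeniusNumber_pair cop ha hb).2 h
  have hab : a + b ≤ a * b := Nat.add_le_mul ha hb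
  omega

lemma diag_mem (a₁ a₂ b₁ b₂ : ℕ) : ∀ k : ℕ,
    ((k, k) : ℕ × ℕ) ∈ AddSubmonoid.closure ({(a₁, 0), (a₂, 0), (0, b₁), (0, b₂), (1, 1)} : Set (ℕ × ℕ)) := by
  intro k
  induction k with
  | zero => exact zero_mem _
  | succ k ih =>
    have h1 : ((1, 1) : ℕ × ℕ) ∈ AddSubmonoid.closure ({(a₁, 0), (a₂, 0), (0, b₁), (0, b₂), (1, 1)} :
        Set (ℕ × ℕ)) := subset_closure (by simp)
    simpa using add_mem ih h1

lemma mem_S_iff_s9 (a₁ a₂ b₁ b₂ : ℕ) (p : ℕ × ℕ) :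
    p ∈ AddSubmonoid.closure ({(a₁, 0), (a₂, 0), (0, b₁), (0, b₂), (1, 1)} : Set (ℕ × ℕ)) ↔
      ∃ k s t, s ∈ AddSubmonoid.closure ({a₁, a₂} : Set ℕ) ∧ t ∈ AddSubmonoid.closure ({b₁, b₂} : Set ℕ) ∧
        p = (s + k, t + k) := by
  constructor
  · intro hp
    induction hp using AddSubmonoid.closure_induction with
    | mem x hx =>
      simp only [Set.mem_insert_iff, Set.mem_singleton_iff] at hx
      rcases hx with rfl | rfl | rfl | rfl | rfl
      · exact ⟨0, a₁, 0, subset_closure (by simp), zero_mem _, by simp⟩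
      · exact ⟨0, a₂, 0, subset_closure (by simp), zero_mem _, by simp⟩
      · exact ⟨0, 0, b₁, zero_mem _, subset_closure (by simp), by simp⟩
      · exact ⟨0, 0, b₂, zero_mem _, subset_closure (by simp), by simp⟩
      · exact ⟨1, 0, 0, zero_mem _, zero_mem _, by simp⟩
    | zero => exact ⟨0, 0, 0, zero_mem _, zero_mem _, rfl⟩
    | add x y hx hy ihx ihy =>
      obtain ⟨k, s, t, hs, ht, rfl⟩ := ihx
      obtain ⟨k', s', t', hs', ht', rfl⟩ := ihy
      exact ⟨k + k', s + s', t + t', add_mem hs hs', add_mem ht ht',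
        by simp [Prod.ext_iff]; constructor <;> ring⟩
  · rintro ⟨k, s, t, hs, ht, rfl⟩
    have h1 : ((s, 0) : ℕ × ℕ) ∈ AddSubmonoid.closure ({(a₁, 0), (a₂, 0), (0, b₁), (0, b₂), (1, 1)} :
        Set (ℕ × ℕ)) := by
      induction hs using AddSubmonoid.closure_induction with
      | mem x hx =>
        simp only [Set.mem_insert_iff, Set.mem_singleton_iff] at hx
        rcases hx with rfl | rfl
        · exact subset_closure (by simp)
        · exact subset_closure (by simp)
      | zero => exact zero_mem _
      | add x y hx hy ihx ihy => simpa using add_mem ihx ihy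
    have h2 : ((0, t) : ℕ × ℕ) ∈ AddSubmonoid.closure ({(a₁, 0), (a₂, 0), (0, b₁), (0, b₂), (1, 1)} :
        Set (ℕ × ℕ)) := by
      induction ht using AddSubmonoid.closure_induction with
      | mem x hx =>
        simp only [Set.mem_insert_iff, Set.mem_singleton_iff] at hx
        rcases hx with rfl | rfl
        · exact subset_closure (by simp)
        · exact subset_closure (by simp)
      | zero => exact zero_mem _
      | add x y hx hy ihx ihy => simpa using add_mem ihx ihy
    have h3 := diag_mem a₁ a₂ b₁ b₂ k
    have := add_mem (add_mem h1 h2) h3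
    simpa using this

/-- S = ⟨(a₁,0),(a₂,0),(0,b₁),(0,b₂),(1,1)⟩ has at least two maximal gaps. -/
theorem at_least_two_maximal_gaps_second_class
    (a₁ a₂ b₁ b₂ : ℕ)
    (hga : Nat.gcd a₁ a₂ = 1) (hgb : Nat.gcd b₁ b₂ = 1)
    (S : AddSubmonoid (ℕ × ℕ))
    (hS : S = AddSubmonoid.closure {(a₁, 0), (a₂, 0), (0, b₁), (0, b₂), (1, 1)})
    (hmin : ∀ B ⊂ ({(a₁, 0), (a₂, 0), (0, b₁), (0, b₂), (1, 1)} : Set (ℕ × ℕ)),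
      AddSubmonoid.closure B ≠ S)
    (hcard : ({(a₁, 0), (a₂, 0), (0, b₁), (0, b₂), (1, 1)} : Set (ℕ × ℕ)).ncard = 5) :
    2 ≤ (FA2 S).ncard := by
  -- master removal lemma
  have key : ∀ (x : ℕ × ℕ) (B : Set (ℕ × ℕ)), x ∈ AddSubmonoid.closure B →
      insert x B = ({(a₁, 0), (a₂, 0), (0, b₁), (0, b₂), (1, 1)} : Set (ℕ × ℕ)) →
      B.ncard ≤ 4 → False := by
    intro x B hx hins hB
    have hsub : B ⊆ ({(a₁, 0), (a₂, 0), (0, b₁), (0, b₂), (1, 1)} : Set (ℕ × ℕ)) :=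
      hins ▸ Set.subset_insert x B
    have hne : B ≠ ({(a₁, 0), (a₂, 0), (0, b₁), (0, b₂), (1, 1)} : Set (ℕ × ℕ)) := by
      intro h; rw [h, hcard] at hB; omega
    have hss : B ⊂ ({(a₁, 0), (a₂, 0), (0, b₁), (0, b₂), (1, 1)} : Set (ℕ × ℕ)) :=
      hsub.ssubset_of_ne hne
    have hcl : AddSubmonoid.closure B = S := by
      rw [hS, ← hins]
      refine le_antisymm (closure_mono (Set.subset_insert x B)) ?_
      rw [closure_le]
      exact Set.insert_subset_iff.mpr ⟨hx, subset_closure⟩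
    exact hmin B hss hcl
  -- multiples stay in a submonoid (concrete form)
  have hmul : ∀ (M : AddSubmonoid (ℕ × ℕ)) (x y : ℕ), ((x, y) : ℕ × ℕ) ∈ M →
      ∀ n : ℕ, ((n * x, n * y) : ℕ × ℕ) ∈ M := by
    intro M x y h n
    induction n with
    | zero => simp only [Nat.zero_mul]; exact zero_mem M
    | succ n ih =>
      have := add_mem ih h
      simpa [Nat.succ_mul] using this
  -- all generators are ≥ 2
  have ha₁ : 2 ≤ a₁ := by
    by_contra h
    interval_cases a₁
    · exact key (0, 0) {(a₂, 0), (0, b₁), (0, b₂), (1, 1)} (zero_mem _) rfl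
        (ncard_le_four' _ _ _ _)
    · refine key (a₂, 0) {(1, 0), (0, b₁), (0, b₂), (1, 1)} ?_ (Set.insert_comm _ _ _)
        (ncard_le_four' _ _ _ _)
      have := hmul (AddSubmonoid.closure {((1:ℕ), (0:ℕ)), (0, b₁), (0, b₂), (1, 1)}) 1 0
        (subset_closure (by simp)) a₂
      simpa using this
  have ha₂ : 2 ≤ a₂ := by
    by_contra h
    interval_cases a₂
    · exact key (0, 0) {(a₁, 0), (0, b₁), (0, b₂), (1, 1)} (zero_mem _)
        (Set.insert_comm _ _ _) (ncard_le_four' _ _ _ _)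
    · refine key (a₁, 0) {(1, 0), (0, b₁), (0, b₂), (1, 1)} ?_ rfl (ncard_le_four' _ _ _ _)
      have := hmul (AddSubmonoid.closure {((1:ℕ), (0:ℕ)), (0, b₁), (0, b₂), (1, 1)}) 1 0
        (subset_closure (by simp)) a₁
      simpa using this
  have hb₁ : 2 ≤ b₁ := by
    by_contra h
    interval_cases b₁
    · refine key (0, 0) {(a₁, 0), (a₂, 0), (0, b₂), (1, 1)} (zero_mem _) ?_
        (ncard_le_four' _ _ _ _)
      rw [Set.insert_comm ((0:ℕ),(0:ℕ)) (a₁, 0), Set.insert_comm ((0:ℕ),(0:ℕ)) (a₂, 0)]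
    · refine key (0, b₂) {(a₁, 0), (a₂, 0), (0, 1), (1, 1)} ?_ ?_ (ncard_le_four' _ _ _ _)
      · have := hmul (AddSubmonoid.closure {((a₁:ℕ), (0:ℕ)), (a₂, 0), (0, 1), (1, 1)}) 0 1
          (subset_closure (by simp)) b₂
        simpa using this
      · rw [Set.insert_comm ((0:ℕ),b₂) (a₁, 0), Set.insert_comm ((0:ℕ),b₂) (a₂, 0),
          Set.insert_comm ((0:ℕ),b₂) ((0:ℕ),(1:ℕ))]
  have hb₂ : 2 ≤ b₂ := by
    by_contra h
    interval_cases b₂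
    · refine key (0, 0) {(a₁, 0), (a₂, 0), (0, b₁), (1, 1)} (zero_mem _) ?_
        (ncard_le_four' _ _ _ _)
      rw [Set.insert_comm ((0:ℕ),(0:ℕ)) (a₁, 0), Set.insert_comm ((0:ℕ),(0:ℕ)) (a₂, 0),
        Set.insert_comm ((0:ℕ),(0:ℕ)) ((0:ℕ),b₁)]
    · refine key (0, b₁) {(a₁, 0), (a₂, 0), (0, 1), (1, 1)} ?_ ?_ (ncard_le_four' _ _ _ _)
      · have := hmul (AddSubmonoid.closure {((a₁:ℕ), (0:ℕ)), (a₂, 0), (0, 1), (1, 1)}) 0 1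
          (subset_closure (by simp)) b₁
        simpa using this
      · rw [Set.insert_comm ((0:ℕ),b₁) (a₁, 0), Set.insert_comm ((0:ℕ),b₁) (a₂, 0)]
  have memS : ∀ p : ℕ × ℕ, p ∈ S ↔ ∃ k s t, s ∈ AddSubmonoid.closure ({a₁, a₂} : Set ℕ) ∧
      t ∈ AddSubmonoid.closure ({b₁, b₂} : Set ℕ) ∧ p = (s + k, t + k) := by
    intro p; rw [hS]; exact mem_S_iff_s9 a₁ a₂ b₁ b₂ p
  have hone₁ : (1 : ℕ) ∉ AddSubmonoid.closure ({a₁, a₂} : Set ℕ) := one_notmem_pair ha₁ ha₂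
  have hone₂ : (1 : ℕ) ∉ AddSubmonoid.closure ({b₁, b₂} : Set ℕ) := one_notmem_pair hb₁ hb₂
  -- (1,0) is a gap
  have h10 : ((1, 0) : ℕ × ℕ) ∉ S := by
    rw [memS]
    rintro ⟨k, s, t, hs, ht, heq⟩
    rw [Prod.ext_iff] at heq
    simp only at heq
    have hk : k = 0 := by omega
    have hs1 : s = 1 := by omega
    exact hone₁ (hs1 ▸ hs)
  -- gaps are bounded
  set N : ℕ := a₁ * a₂ + b₁ * b₂ with hN
  have hbd : ∀ p : ℕ × ℕ, p ∉ S → p.1 ≤ N ∧ p.2 ≤ N := by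
    intro p hp
    constructor
    · by_contra h
      push_neg at h
      apply hp
      rw [memS]
      by_cases hp2 : b₁ * b₂ ≤ p.2
      · exact ⟨0, p.1, p.2, mem_pair_of_big ha₁ ha₂ hga (by omega),
          mem_pair_of_big hb₁ hb₂ hgb hp2, by simp⟩
      · exact ⟨p.2, p.1 - p.2, 0, mem_pair_of_big ha₁ ha₂ hga (by omega), zero_mem _,
          by rw [Prod.ext_iff]; constructor <;> simp <;> omega⟩
    · by_contra h
      push_neg at h
      apply hp
      rw [memS]
      by_cases hp1 : a₁ * a₂ ≤ p.1
      · exact ⟨0, p.1, p.2, mem_pair_of_big ha₁ ha₂ hga hp1,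
          mem_pair_of_big hb₁ hb₂ hgb (by omega), by simp⟩
      · exact ⟨p.1, 0, p.2 - p.1, zero_mem _, mem_pair_of_big hb₁ hb₂ hgb (by omega),
          by rw [Prod.ext_iff]; constructor <;> simp <;> omega⟩
  -- every gap lies below a maximal gap
  have hmax : ∀ g : ℕ × ℕ, g ∉ S → ∃ m, m ∈ FA2 S ∧ g ≤ m := by
    have main : ∀ d (g : ℕ × ℕ), g ∉ S → 2 * N + 1 - (g.1 + g.2) ≤ d →
        ∃ m, m ∈ FA2 S ∧ g ≤ m := by
      intro d
      induction d with
      | zero =>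
        intro g hg h0
        exact absurd h0 (by have := hbd g hg; omega)
      | succ d ih =>
        intro g hg hle
        by_cases hmx : ∀ g', g' ∉ S → g ≤ g' → g' = g
        · exact ⟨g, ⟨hg, hmx⟩, le_refl g⟩
        · push_neg at hmx
          obtain ⟨g', hg', hgle, hne⟩ := hmx
          have h1 : g.1 ≤ g'.1 := hgle.1
          have h2 : g.2 ≤ g'.2 := hgle.2
          have hsum : g.1 + g.2 < g'.1 + g'.2 := by
            rcases Nat.lt_or_ge (g.1 + g.2) (g'.1 + g'.2) with h | h
            · exact h
            · exact absurd (Prod.ext (by omega) (by omega)) hne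
          have hb' := hbd g' hg'
          obtain ⟨m, hm, hgm⟩ := ih g' hg' (by omega)
          exact ⟨m, hm, le_trans hgle hgm⟩
    intro g hg
    exact main (2 * N + 1 - (g.1 + g.2)) g hg le_rfl
  -- FA2 S is finite
  have hfin : (FA2 S).Finite := by
    apply Set.Finite.subset (Set.finite_Icc ((0, 0) : ℕ × ℕ) (N, N))
    intro p hp
    rw [Set.mem_Icc]
    obtain ⟨hp1, hp2⟩ := hbd p hp.1
    exact ⟨⟨Nat.zero_le _, Nat.zero_le _⟩, ⟨hp1, hp2⟩⟩
  -- main contradiction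
  by_contra hlt
  push_neg at hlt
  obtain ⟨m₀, hm₀, -⟩ := hmax (1, 0) h10
  have hpos : 0 < (FA2 S).ncard := (Set.ncard_pos hfin).mpr ⟨m₀, hm₀⟩
  have h1' : (FA2 S).ncard = 1 := by omega
  rw [Set.ncard_eq_one] at h1'
  obtain ⟨m, hm⟩ := h1'
  have hmFA : m ∈ FA2 S := by rw [hm]; rfl
  have hmS : m ∉ S := hmFA.1
  have hall : ∀ g, g ∉ S → g ≤ m := by
    intro g hg
    obtain ⟨m', hm', hgm⟩ := hmax g hg
    rw [hm, Set.mem_singleton_iff] at hm'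
    exact hm' ▸ hgm
  -- (m.1 + 1, 1) ∈ S, hence m.1 ∈ T₁
  have hx : ((m.1 + 1, 1) : ℕ × ℕ) ∈ S := by
    by_contra h
    have := (hall _ h).1
    simp only at this
    omega
  have hm1T : m.1 ∈ AddSubmonoid.closure ({a₁, a₂} : Set ℕ) := by
    rw [memS] at hx
    obtain ⟨k, s, t, hs, ht, heq⟩ := hx
    rw [Prod.ext_iff] at heq
    simp only at heq
    rcases (by omega : k = 0 ∧ t = 1 ∨ k = 1 ∧ t = 0) with ⟨hk, htv⟩ | ⟨hk, htv⟩
    · exact absurd (htv ▸ ht) hone₂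
    · have : s = m.1 := by omega
      exact this ▸ hs
  -- (1, m.2 + 1) ∈ S, hence m.2 ∈ T₂
  have hy : ((1, m.2 + 1) : ℕ × ℕ) ∈ S := by
    by_contra h
    have := (hall _ h).2
    simp only at this
    omega
  have hm2T : m.2 ∈ AddSubmonoid.closure ({b₁, b₂} : Set ℕ) := by
    rw [memS] at hy
    obtain ⟨k, s, t, hs, ht, heq⟩ := hy
    rw [Prod.ext_iff] at heq
    simp only at heq
    rcases (by omega : k = 0 ∧ s = 1 ∨ k = 1 ∧ s = 0) with ⟨hk, hsv⟩ | ⟨hk, hsv⟩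
    · exact absurd (hsv ▸ hs) hone₁
    · have : t = m.2 := by omega
      exact this ▸ ht
  apply hmS
  rw [memS]
  exact ⟨0, m.1, m.2, hm1T, hm2T, by simp⟩
end

section
/- Let T₁ = ⟨a₁,a₂⟩ and T₂ = ⟨b₁,b₂⟩ be numerical semigroups with a₁ < a₂, b₁ < b₂, gcd(a₁,a₂)=gcd(b₁,b₂)=1, and let S = ⟨(a₁,0),(a₂,0),(0,b₁),(0,b₂),(1,1)⟩ ⊆ ℕ². If a₁ ∉ T₂, then f₁ = (a₁−1, a₁−1+F(T₂)) is a maximal gap of S. -/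
/-- Symmetry of the two-generator numerical semigroup at a gap `k`. -/
lemma aux_two_gen_sym (b₁ b₂ k : ℕ) (hb2 : 0 < b₂) (cop : Nat.Coprime b₁ b₂)
    (hk : ∀ c d : ℕ, c * b₁ + d * b₂ ≠ k) :
    ∃ e f : ℕ, e * b₁ + f * b₂ + k + b₁ + b₂ = b₁ * b₂ := by
  haveI : NeZero b₂ := ⟨by omega⟩
  have hunit : IsUnit ((b₁ : ZMod b₂)) := by
    rw [ZMod.isUnit_iff_coprime]; exact cop
  set c : ℕ := ((k : ZMod b₂) * (b₁ : ZMod b₂)⁻¹).val with hcdef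
  have hclt : c < b₂ := ZMod.val_lt _
  have hcast : ((c * b₁ : ℕ) : ZMod b₂) = (k : ZMod b₂) := by
    push_cast
    rw [hcdef, ZMod.natCast_val, ZMod.cast_id, mul_assoc,
      ZMod.inv_mul_of_unit _ hunit, mul_one]
  have hmodeq : c * b₁ ≡ k [MOD b₂] := (ZMod.natCast_eq_natCast_iff _ _ _).mp hcast
  obtain ⟨d, hd⟩ := hmodeq.dvd
  -- hd : (k : ℤ) - (c * b₁ : ℕ) = b₂ * d
  rcases le_or_gt 0 d with hd0 | hd0
  · exfalso
    apply hk c d.toNat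
    have : ((c * b₁ + d.toNat * b₂ : ℕ) : ℤ) = (k : ℤ) := by
      push_cast [Int.toNat_of_nonneg hd0] at hd ⊢
      linarith [hd]
    exact_mod_cast this
  · refine ⟨b₂ - 1 - c, (-1 - d).toNat, ?_⟩
    have h1 : ((b₂ - 1 - c : ℕ) : ℤ) = (b₂ : ℤ) - 1 - c := by
      push_cast [Nat.cast_sub (by omega : c ≤ b₂ - 1), Nat.cast_sub (by omega : 1 ≤ b₂)]
      ring
    have h2 : (((-1 - d).toNat : ℤ)) = -1 - d := Int.toNat_of_nonneg (by omega)
    have := hd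
    zify
    rw [h1, h2]
    push_cast at this ⊢
    linear_combination this
  
/-- Membership in the 5-generator submonoid of ℕ². -/
lemma aux_memS_iff (a₁ a₂ b₁ b₂ : ℕ) (v : ℕ × ℕ) :
    v ∈ AddSubmonoid.closure ({(a₁, 0), (a₂, 0), (0, b₁), (0, b₂), (1, 1)} : Set (ℕ × ℕ)) ↔
    ∃ c₁ c₂ c₃ c₄ t : ℕ, v = (c₁ * a₁ + c₂ * a₂ + t, c₃ * b₁ + c₄ * b₂ + t) := by
  constructor
  · intro hv
    induction hv using AddSubmonoid.closure_induction with
    | mem x hx =>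
      simp only [Set.mem_insert_iff, Set.mem_singleton_iff] at hx
      rcases hx with rfl | rfl | rfl | rfl | rfl
      · exact ⟨1, 0, 0, 0, 0, by simp⟩
      · exact ⟨0, 1, 0, 0, 0, by simp⟩
      · exact ⟨0, 0, 1, 0, 0, by simp⟩
      · exact ⟨0, 0, 0, 1, 0, by simp⟩
      · exact ⟨0, 0, 0, 0, 1, by simp⟩
    | zero => exact ⟨0, 0, 0, 0, 0, by simp; rfl⟩
    | add x y hx hy ihx ihy =>
      obtain ⟨c₁, c₂, c₃, c₄, t, rfl⟩ := ihx
      obtain ⟨d₁, d₂, d₃, d₄, s, rfl⟩ := ihy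
      refine ⟨c₁ + d₁, c₂ + d₂, c₃ + d₃, c₄ + d₄, t + s, ?_⟩
      simp only [Prod.mk_add_mk, Prod.mk.injEq]
      constructor <;> ring
  · rintro ⟨c₁, c₂, c₃, c₄, t, rfl⟩
    have key : ((c₁ * a₁ + c₂ * a₂ + t, c₃ * b₁ + c₄ * b₂ + t) : ℕ × ℕ) =
        c₁ • ((a₁, 0) : ℕ × ℕ) + c₂ • ((a₂, 0) : ℕ × ℕ) + c₃ • ((0, b₁) : ℕ × ℕ)
          + c₄ • ((0, b₂) : ℕ × ℕ) + t • ((1, 1) : ℕ × ℕ) := by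
      simp only [Prod.smul_mk, smul_eq_mul, Prod.mk_add_mk, Prod.mk.injEq]
      constructor <;> ring
    rw [key]
    have m1 : ((a₁, 0) : ℕ × ℕ) ∈ AddSubmonoid.closure
        ({(a₁, 0), (a₂, 0), (0, b₁), (0, b₂), (1, 1)} : Set (ℕ × ℕ)) :=
      AddSubmonoid.subset_closure (by simp)
    have m2 : ((a₂, 0) : ℕ × ℕ) ∈ AddSubmonoid.closure
        ({(a₁, 0), (a₂, 0), (0, b₁), (0, b₂), (1, 1)} : Set (ℕ × ℕ)) :=
      AddSubmonoid.subset_closure (by simp)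
    have m3 : ((0, b₁) : ℕ × ℕ) ∈ AddSubmonoid.closure
        ({(a₁, 0), (a₂, 0), (0, b₁), (0, b₂), (1, 1)} : Set (ℕ × ℕ)) :=
      AddSubmonoid.subset_closure (by simp)
    have m4 : ((0, b₂) : ℕ × ℕ) ∈ AddSubmonoid.closure
        ({(a₁, 0), (a₂, 0), (0, b₁), (0, b₂), (1, 1)} : Set (ℕ × ℕ)) :=
      AddSubmonoid.subset_closure (by simp)
    have m5 : ((1, 1) : ℕ × ℕ) ∈ AddSubmonoid.closure
        ({(a₁, 0), (a₂, 0), (0, b₁), (0, b₂), (1, 1)} : Set (ℕ × ℕ)) :=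
      AddSubmonoid.subset_closure (by simp)
    exact add_mem (add_mem (add_mem (add_mem (AddSubmonoid.nsmul_mem _ m1 _)
      (AddSubmonoid.nsmul_mem _ m2 _)) (AddSubmonoid.nsmul_mem _ m3 _))
      (AddSubmonoid.nsmul_mem _ m4 _)) (AddSubmonoid.nsmul_mem _ m5 _)

/-- if a₁ ∉ T₂, then (a₁−1, a₁−1+F(T₂)) is a maximal gap of S. -/
theorem maximal_gap_f1
    (a₁ a₂ b₁ b₂ : ℕ)
    (ha2 : 2 ≤ a₁) (hb2 : 2 ≤ b₁)
    (ha : a₁ < a₂) (hb : b₁ < b₂)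
    (hga : Nat.gcd a₁ a₂ = 1) (hgb : Nat.gcd b₁ b₂ = 1)
    (T₂ : AddSubmonoid ℕ) (hT₂ : T₂ = AddSubmonoid.closure {b₁, b₂})
    (F₂ : ℕ) (hF₂ : F₂ = sSup {n : ℕ | n ∉ T₂})
    (ha₁ : a₁ ∉ T₂)
    (S : AddSubmonoid (ℕ × ℕ))
    (hS : S = AddSubmonoid.closure {(a₁, 0), (a₂, 0), (0, b₁), (0, b₂), (1, 1)}) :
    (a₁ - 1, a₁ - 1 + F₂) ∈ FA2 S := by
  have hbcop : Nat.Coprime b₁ b₂ := hgb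
  have hFrob := frobeniusNumber_pair hbcop (by omega) (by omega)
  have hT2mem : ∀ n : ℕ, n ∈ T₂ ↔ ∃ c d : ℕ, c * b₁ + d * b₂ = n := by
    intro n
    rw [hT₂, AddSubmonoid.mem_closure_pair]
    simp [smul_eq_mul]
  have hFval : F₂ = b₁ * b₂ - b₁ - b₂ := by
    rw [hF₂, hT₂]
    exact IsGreatest.csSup_eq hFrob
  have hFnot : F₂ ∉ T₂ := by
    rw [hT₂, hFval]
    exact hFrob.1
  have hub : ∀ n : ℕ, n ∉ T₂ → n ≤ F₂ := by
    intro n hn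
    rw [hFval]
    exact hFrob.2 (by rw [hT₂] at hn; exact hn)
  have hbig : ∀ n : ℕ, F₂ < n → n ∈ T₂ := by
    intro n hn
    by_contra h
    exact absurd (hub n h) (by omega)
  have haF : a₁ ≤ F₂ := hub a₁ ha₁
  -- symmetry: F₂ - a₁ ∈ T₂
  obtain ⟨e, f, hef⟩ := aux_two_gen_sym b₁ b₂ a₁ (by omega) hbcop
    (by intro c d hcd; exact ha₁ ((hT2mem a₁).mpr ⟨c, d, hcd⟩))
  have hefF : e * b₁ + f * b₂ + a₁ = F₂ := by omega
  constructor
  · -- (a₁ - 1, a₁ - 1 + F₂) ∉ S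
    intro hmem
    rw [hS, aux_memS_iff] at hmem
    obtain ⟨c₁, c₂, c₃, c₄, t, heq⟩ := hmem
    have hx : a₁ - 1 = c₁ * a₁ + c₂ * a₂ + t := congrArg Prod.fst heq
    have hy : a₁ - 1 + F₂ = c₃ * b₁ + c₄ * b₂ + t := congrArg Prod.snd heq
    have e1 : c₁ = 0 ∨ a₁ ≤ c₁ * a₁ := by
      rcases Nat.eq_zero_or_pos c₁ with h' | h'
      · exact Or.inl h'
      · exact Or.inr (Nat.le_mul_of_pos_left a₁ h')
    have e2 : c₂ = 0 ∨ a₂ ≤ c₂ * a₂ := by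
      rcases Nat.eq_zero_or_pos c₂ with h' | h'
      · exact Or.inl h'
      · exact Or.inr (Nat.le_mul_of_pos_left a₂ h')
    have hc₁ : c₁ = 0 := by omega
    have hc₂ : c₂ = 0 := by omega
    subst hc₁; subst hc₂
    have ht : t = a₁ - 1 := by omega
    apply hFnot
    rw [hT2mem]
    exact ⟨c₃, c₄, by omega⟩
  · -- maximality
    rintro ⟨x, y⟩ hg hle
    rw [Prod.mk_le_mk] at hle
    obtain ⟨hlex, hley⟩ := hle
    by_contra hne
    apply hg
    rw [hS, aux_memS_iff]
    rw [Prod.mk.injEq] at hne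
    push_neg at hne
    by_cases hxa : x = a₁ - 1
    · -- then y > a₁ - 1 + F₂
      have hy : a₁ - 1 + F₂ < y := by
        have := hne hxa
        omega
      obtain ⟨c, d, hcd⟩ := (hT2mem (y - (a₁ - 1))).mp (hbig _ (by omega))
      exact ⟨0, 0, c, d, a₁ - 1, by rw [Prod.mk.injEq]; constructor <;> omega⟩
    · -- x ≥ a₁
      have hxa1 : a₁ ≤ x := by omega
      obtain ⟨q, r, hr, hx⟩ : ∃ q r : ℕ, r < a₁ ∧ x = a₁ * q + r :=
        ⟨x / a₁, x % a₁, Nat.mod_lt x (by omega), (Nat.div_add_mod x a₁).symm⟩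
      have hq1 : 1 ≤ q := by
        rcases Nat.eq_zero_or_pos q with rfl | h
        · simp at hx; omega
        · exact h
      by_cases hcrit : r = a₁ - 1 ∧ y = a₁ - 1 + F₂
      · -- use symmetry
        obtain ⟨hr1, hy1⟩ := hcrit
        obtain ⟨q', rfl⟩ : ∃ q', q = q' + 1 := ⟨q - 1, by omega⟩
        refine ⟨q', 0, e, f, 2 * a₁ - 1, ?_⟩
        have hmul : a₁ * (q' + 1) = q' * a₁ + a₁ := by ring
        rw [hmul] at hx
        rw [Prod.mk.injEq]
        constructor <;> omega
      · -- y - r > F₂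
        have hbigyr : F₂ < y - r := by omega
        obtain ⟨c, d, hcd⟩ := (hT2mem (y - r)).mp (hbig _ hbigyr)
        refine ⟨q, 0, c, d, r, ?_⟩
        have hmul : a₁ * q = q * a₁ := by ring
        rw [hmul] at hx
        rw [Prod.mk.injEq]
        constructor <;> omega
end

section
/- Let T = ⟨a₁,a₂⟩ with gcd(a₁,a₂)=1, a₁ ≥ 2, let d₂,…,d_d ≥ 1, and let S' ⊆ ℕ^d be generated by {a₁e₁, a₂e₁, e₂,…,e_d} ∪ {e₁ + d_j e_j : 2 ≤ j ≤ d}. If a₁ = 2, then the gap set of S' is exactly { h e₁ + Σ_{j≥2} λ_j e_j : h ∈ H(T), 0 ≤ λ_j ≤ d_j − 1 }. -/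
/-- gap set of S' = ⟨a₁e₁, a₂e₁, e₂,…,e_d, e₁+d_je_j⟩ when a₁ = 2. -/
theorem gaps_of_S'_when_a1_eq_two
    (d : ℕ) [NeZero d] (hd : 2 ≤ d)
    (a₁ a₂ : ℕ) (ha₁ : a₁ = 2) (hg : Nat.gcd a₁ a₂ = 1)
    (T : AddSubmonoid ℕ) (hT : T = AddSubmonoid.closure {a₁, a₂})
    (dj : Fin d → ℕ) (hdj : ∀ j : Fin d, j ≠ 0 → 1 ≤ dj j)
    (S' : AddSubmonoid (Fin d → ℕ))
    (hS' : S' = AddSubmonoid.closure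
      ({Pi.single (0 : Fin d) a₁, Pi.single (0 : Fin d) a₂} ∪
       {x | ∃ j : Fin d, j ≠ 0 ∧ x = Pi.single j 1} ∪
       {x | ∃ j : Fin d, j ≠ 0 ∧ x = Pi.single (0 : Fin d) 1 + Pi.single j (dj j)})) :
    {x : Fin d → ℕ | x ∉ S'} =
      {x : Fin d → ℕ | x 0 ∉ T ∧ ∀ j : Fin d, j ≠ 0 → x j ≤ dj j - 1} := by
  subst ha₁ hT hS'
  set G : Set (Fin d → ℕ) :=
      ({Pi.single (0 : Fin d) 2, Pi.single (0 : Fin d) a₂} ∪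
       {x | ∃ j : Fin d, j ≠ 0 ∧ x = Pi.single j 1} ∪
       {x | ∃ j : Fin d, j ≠ 0 ∧ x = Pi.single (0 : Fin d) 1 + Pi.single j (dj j)}) with hG
  -- even numbers are in T
  have evenT : ∀ n : ℕ, n % 2 = 0 → n ∈ AddSubmonoid.closure ({2, a₂} : Set ℕ) := by
    intro n hn
    have h2 : (2:ℕ) ∈ AddSubmonoid.closure ({2, a₂} : Set ℕ) :=
      AddSubmonoid.subset_closure (by simp)
    have := nsmul_mem h2 (n / 2)
    simpa [smul_eq_mul, show n / 2 * 2 = n by omega] using this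
  -- single at 0 of elements of T are in S'
  have single0 : ∀ n ∈ AddSubmonoid.closure ({2, a₂} : Set ℕ),
      Pi.single (0 : Fin d) n ∈ AddSubmonoid.closure G := by
    intro n hn
    induction hn using AddSubmonoid.closure_induction with
    | mem w hw =>
        rcases hw with rfl | rfl
        · exact AddSubmonoid.subset_closure (Or.inl (Or.inl (Or.inl rfl)))
        · exact AddSubmonoid.subset_closure (Or.inl (Or.inl (Or.inr rfl)))
    | zero => simpa using zero_mem _
    | add a b _ _ ha hb => simpa [Pi.single_add] using add_mem ha hb
  -- single at j ≠ 0 are in S'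
  have singlej : ∀ (j : Fin d), j ≠ 0 → ∀ m : ℕ,
      Pi.single j m ∈ AddSubmonoid.closure G := by
    intro j hj m
    have h1 : Pi.single j (1:ℕ) ∈ AddSubmonoid.closure G :=
      AddSubmonoid.subset_closure (Or.inl (Or.inr ⟨j, hj, rfl⟩))
    have := nsmul_mem h1 m
    have heq : m • (Pi.single j 1 : Fin d → ℕ) = Pi.single j m := by
      funext k
      by_cases hk : k = j <;> simp [hk, Pi.single_apply]
    rwa [heq] at this
  -- key : any y with y 0 ∈ T lies in S'
  have key : ∀ y : Fin d → ℕ, y 0 ∈ AddSubmonoid.closure ({2, a₂} : Set ℕ) →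
      y ∈ AddSubmonoid.closure G := by
    intro y hy
    have hrep : y = ∑ k, Pi.single k (y k) := (Finset.univ_sum_single y).symm
    rw [hrep]
    refine AddSubmonoid.sum_mem _ fun k _ => ?_
    by_cases hk : k = 0
    · subst hk; exact single0 _ hy
    · exact singlej k hk _
  -- structure lemma for members of S'
  have P : ∀ z ∈ AddSubmonoid.closure G,
      z 0 ∈ AddSubmonoid.closure ({2, a₂} : Set ℕ) ∨ ∃ j : Fin d, j ≠ 0 ∧ dj j ≤ z j := by
    intro z hz
    induction hz using AddSubmonoid.closure_induction with
    | mem w hw =>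
        rcases hw with (hw | hw) | hw
        · rcases hw with rfl | rfl
          · left; simpa using evenT 2 rfl
          · left
            simp only [Pi.single_eq_same]
            exact AddSubmonoid.subset_closure (by simp)
        · obtain ⟨j, hj, rfl⟩ := hw
          left
          simpa [Pi.single_eq_of_ne (Ne.symm hj)] using zero_mem _
        · obtain ⟨j, hj, rfl⟩ := hw
          right
          exact ⟨j, hj, by simp [Pi.single_eq_of_ne hj]⟩
    | zero => left; simpa using zero_mem _
    | add a b _ _ ha hb =>
        rcases ha with ha | ⟨j, hj, hja⟩
        · rcases hb with hb | ⟨j, hj, hjb⟩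
          · left; exact add_mem ha hb
          · right; exact ⟨j, hj, le_trans hjb (by simp)⟩
        · right; exact ⟨j, hj, le_trans hja (by simp)⟩
  ext x
  simp only [Set.mem_setOf_eq]
  constructor
  · intro hx
    have hx0 : x 0 ∉ AddSubmonoid.closure ({2, a₂} : Set ℕ) := fun h => hx (key x h)
    refine ⟨hx0, ?_⟩
    intro j hj
    by_contra hle
    push_neg at hle
    have hdle : dj j ≤ x j := by have := hdj j hj; omega
    have hodd : x 0 % 2 = 1 := by
      by_contra h
      exact hx0 (evenT _ (by omega))
    -- decompose x = g + y
    set g : Fin d → ℕ := Pi.single (0 : Fin d) 1 + Pi.single j (dj j) with hgdef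
    have hgmem : g ∈ AddSubmonoid.closure G :=
      AddSubmonoid.subset_closure (Or.inr ⟨j, hj, rfl⟩)
    have hy : (fun k => x k - g k) ∈ AddSubmonoid.closure G := by
      apply key
      have : g 0 = 1 := by simp [hgdef, Pi.single_eq_of_ne (Ne.symm hj)]
      rw [this]
      exact evenT _ (by omega)
    have hxeq : x = g + fun k => x k - g k := by
      funext k
      have hg0 : g 0 = 1 := by simp [hgdef, Pi.single_eq_of_ne (Ne.symm hj)]
      have hgj : g j = dj j := by simp [hgdef, Pi.single_eq_of_ne hj]
      by_cases hk : k = 0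
      · subst hk; simp only [Pi.add_apply]; omega
      · by_cases hkj : k = j
        · subst hkj; simp only [Pi.add_apply]; omega
        · have : g k = 0 := by
            simp [hgdef, Pi.single_eq_of_ne hk, Pi.single_eq_of_ne hkj]
          simp only [Pi.add_apply]; omega
    exact hx (hxeq ▸ add_mem hgmem hy)
  · rintro ⟨hx0, hxj⟩ hx
    rcases P x hx with h | ⟨j, hj, hle⟩
    · exact hx0 h
    · have := hxj j hj
      have := hdj j hj
      omega
end

section
/- Let S = ⟨(3,0),(a₂,0),(0,1),(1,d₂),(2,d₂)⟩ ⊆ ℕ² with gcd(3,a₂)=1, a₂ > 3, d₂ ≥ 1, and (2,d₂) not in ⟨(3,0),(a₂,0),(0,1),(1,d₂)⟩. Then the gap set of S is {(h,t) : h ∈ H(T), 0 ≤ t ≤ d₂−1} where T = ⟨3,a₂⟩, and S has a unique maximal gap, namely (F(T), d₂−1). -/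
namespace AddSubmonoid

def fstMemOrLeSnd (T : AddSubmonoid ℕ) (d : ℕ) : AddSubmonoid (ℕ × ℕ) where
  carrier := {p | p.1 ∈ T ∨ d ≤ p.2}
  zero_mem' := Or.inl T.zero_mem
  add_mem' := by
    rintro p q (hp | hp) (hq | hq)
    · exact Or.inl (T.add_mem hp hq)
    all_goals simp only [Set.mem_ofPred_eq, Prod.snd_add]; omega

variable {T : AddSubmonoid ℕ} {d : ℕ}

theorem mem_fstMemOrLeSnd {p : ℕ × ℕ} : p ∈ fstMemOrLeSnd T d ↔ p.1 ∈ T ∨ d ≤ p.2 := Iff.rfl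

theorem closure_eq_fstMemOrLeSnd (a d : ℕ) :
    closure {(3, 0), (a, 0), (0, 1), (1, d), (2, d)} = fstMemOrLeSnd (closure {3, a}) d := by
  set S := closure ({(3, 0), (a, 0), (0, 1), (1, d), (2, d)} : Set (ℕ × ℕ))
  have hS : ∀ q ∈ ({(3, 0), (a, 0), (0, 1), (1, d), (2, d)} : Set (ℕ × ℕ)), q ∈ S :=
    fun q hq => subset_closure hq
  simp only [Set.mem_insert_iff, Set.mem_singleton_iff, forall_eq_or_imp, forall_eq] at hS
  obtain ⟨h30, ha0, h01, h1d, h2d⟩ := hS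
  refine le_antisymm (closure_le.mpr ?_) fun p hp => ?_
  · simp only [Set.insert_subset_iff, Set.singleton_subset_iff, SetLike.mem_coe, mem_fstMemOrLeSnd]
    exact ⟨Or.inl (subset_closure (by simp)), Or.inl (subset_closure (by simp)),
      Or.inl (zero_mem _), Or.inr le_rfl, Or.inr le_rfl⟩
  rcases hp with hp | hp
  · have hinl : (closure {3, a}).map (AddMonoidHom.inl ℕ ℕ) ≤ S := by
      rw [map_le_iff_le_comap, closure_le]
      simpa [Set.insert_subset_iff] using ⟨h30, ha0⟩
    have hp' : p = AddMonoidHom.inl ℕ ℕ p.1 + p.2 • (0, 1) := by ext <;> simp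
    rw [hp']
    exact add_mem (hinl (mem_map_of_mem _ hp)) (nsmul_mem h01 _)
  · have hres : (p.1 % 3, d) ∈ S := by
      have : p.1 % 3 = 0 ∨ p.1 % 3 = 1 ∨ p.1 % 3 = 2 := by omega
      rcases this with h | h | h <;> rw [h]
      · simpa using nsmul_mem h01 d
      · exact h1d
      · exact h2d
    have hp' : p = (p.1 % 3, d) + (p.1 / 3) • (3, 0) + (p.2 - d) • (0, 1) := by
      ext <;> simp <;> omega
    rw [hp']
    exact add_mem (add_mem hres (nsmul_mem h30 _)) (nsmul_mem h01 _)

theorem FA2_fstMemOrLeSnd {F : ℕ} (hF : IsGreatest {n | n ∉ T} F) (hd : 1 ≤ d) :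
    FA2 (fstMemOrLeSnd T d) = {(F, d - 1)} := by
  have hgap : ∀ p : ℕ × ℕ, p ∉ fstMemOrLeSnd T d ↔ p.1 ∉ T ∧ p.2 ≤ d - 1 := by
    intro p
    rw [mem_fstMemOrLeSnd, not_or, not_le, Nat.le_sub_one_iff_lt hd]
  have hFgap : (F, d - 1) ∉ fstMemOrLeSnd T d := (hgap _).mpr ⟨hF.1, le_rfl⟩
  ext p
  simp only [FA2, Set.mem_ofPred_eq, Set.mem_singleton_iff]
  constructor
  · rintro ⟨hp, hmax⟩
    obtain ⟨hp1, hp2⟩ := (hgap p).mp hp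
    exact (hmax _ hFgap ⟨hF.2 hp1, hp2⟩).symm
  · rintro rfl
    refine ⟨hFgap, fun g hg hle => ?_⟩
    obtain ⟨hg1, hg2⟩ := (hgap g).mp hg
    exact Prod.ext (le_antisymm (hF.2 hg1) hle.1) (le_antisymm hg2 hle.2)

end AddSubmonoid

theorem gaps_and_unique_maximal_gap_third_class_general
    (a₂ d₂ : ℕ) (hg : Nat.gcd 3 a₂ = 1) (ha : 3 < a₂) (hd : 1 ≤ d₂)
    (T : AddSubmonoid ℕ) (hT : T = AddSubmonoid.closure {3, a₂})
    (S : AddSubmonoid (ℕ × ℕ))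
    (hS : S = AddSubmonoid.closure {(3, 0), (a₂, 0), (0, 1), (1, d₂), (2, d₂)}) :
    {p : ℕ × ℕ | p ∉ S} = {p : ℕ × ℕ | p.1 ∉ T ∧ p.2 ≤ d₂ - 1} ∧
    FA2 S = {(sSup {n : ℕ | n ∉ T}, d₂ - 1)} := by
  rw [AddSubmonoid.closure_eq_fstMemOrLeSnd, ← hT] at hS
  subst hS
  have hF : IsGreatest {n | n ∉ T} (3 * a₂ - 3 - a₂) := by
    rw [hT]; exact frobeniusNumber_pair hg (by norm_num) (by omega)
  refine ⟨Set.ext fun p => ?_, by rw [hF.csSup_eq, AddSubmonoid.FA2_fstMemOrLeSnd hF hd]⟩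
  simp only [Set.mem_ofPred_eq, AddSubmonoid.mem_fstMemOrLeSnd, not_or, not_le,
    Nat.le_sub_one_iff_lt hd]

/-- gap set and unique maximal gap of
S = ⟨(3,0),(a₂,0),(0,1),(1,d₂),(2,d₂)⟩. -/
theorem gaps_and_unique_maximal_gap_third_class
    (a₂ d₂ : ℕ) (hg : Nat.gcd 3 a₂ = 1) (ha : 3 < a₂) (hd : 1 ≤ d₂)
    (hx : ((2 : ℕ), d₂) ∉ AddSubmonoid.closure {((3 : ℕ), (0 : ℕ)), (a₂, 0), (0, 1), (1, d₂)})
    (T : AddSubmonoid ℕ) (hT : T = AddSubmonoid.closure {3, a₂})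
    (S : AddSubmonoid (ℕ × ℕ))
    (hS : S = AddSubmonoid.closure {(3, 0), (a₂, 0), (0, 1), (1, d₂), (2, d₂)}) :
    {p : ℕ × ℕ | p ∉ S} = {p : ℕ × ℕ | p.1 ∉ T ∧ p.2 ≤ d₂ - 1} ∧
    FA2 S = {(sSup {n : ℕ | n ∉ T}, d₂ - 1)} :=
  gaps_and_unique_maximal_gap_third_class_general a₂ d₂ hg ha hd T hT S hS
end

section
/- Let S = ⟨(3,0),(a₂,0),(0,1),(1,d₂),(2,x₂)⟩ ⊆ ℕ² with gcd(3,a₂)=1, a₂ > 3, 0 < x₂ ≤ d₂, and suppose this is a minimal generating set. Then S has a unique maximal gap if and only if x₂ = d₂. -/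
/-- Membership in the closure is equivalent to having a representation. -/
lemma rep_iff_aux (a₂ d₂ x₂ : ℕ) (p : ℕ × ℕ) :
    p ∈ AddSubmonoid.closure {((3 : ℕ), (0 : ℕ)), (a₂, 0), (0, 1), (1, d₂), (2, x₂)} ↔
    ∃ α β γ δ : ℕ, 3 * α + a₂ * β + γ + 2 * δ = p.1 ∧ γ * d₂ + δ * x₂ ≤ p.2 := by
  constructor
  · intro hp
    induction hp using AddSubmonoid.closure_induction with
    | mem x hx =>
      simp only [Set.mem_insert_iff, Set.mem_singleton_iff] at hx
      rcases hx with h | h | h | h | h <;> subst h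
      · exact ⟨1, 0, 0, 0, by simp, by simp⟩
      · exact ⟨0, 1, 0, 0, by simp, by simp⟩
      · exact ⟨0, 0, 0, 0, by simp, by simp⟩
      · exact ⟨0, 0, 1, 0, by simp, by simp⟩
      · exact ⟨0, 0, 0, 1, by simp, by simp⟩
    | zero => exact ⟨0, 0, 0, 0, by simp, by simp⟩
    | add x y hx hy ihx ihy =>
      obtain ⟨α₁, β₁, γ₁, δ₁, h1, h2⟩ := ihx
      obtain ⟨α₂, β₂, γ₂, δ₂, h3, h4⟩ := ihy
      refine ⟨α₁ + α₂, β₁ + β₂, γ₁ + γ₂, δ₁ + δ₂, ?_, ?_⟩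
      · have : (x + y).1 = x.1 + y.1 := rfl
        rw [this, ← h1, ← h3]; ring
      · have : (x + y).2 = x.2 + y.2 := rfl
        rw [this]
        calc (γ₁ + γ₂) * d₂ + (δ₁ + δ₂) * x₂
            = (γ₁ * d₂ + δ₁ * x₂) + (γ₂ * d₂ + δ₂ * x₂) := by ring
          _ ≤ x.2 + y.2 := Nat.add_le_add h2 h4
  · rintro ⟨α, β, γ, δ, h1, h2⟩
    have hg1 : ((3 : ℕ), (0 : ℕ)) ∈ AddSubmonoid.closure
        {((3 : ℕ), (0 : ℕ)), (a₂, 0), (0, 1), (1, d₂), (2, x₂)} :=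
      AddSubmonoid.subset_closure (by simp)
    have hg2 : ((a₂ : ℕ), (0 : ℕ)) ∈ AddSubmonoid.closure
        {((3 : ℕ), (0 : ℕ)), (a₂, 0), (0, 1), (1, d₂), (2, x₂)} :=
      AddSubmonoid.subset_closure (by simp)
    have hg3 : ((0 : ℕ), (1 : ℕ)) ∈ AddSubmonoid.closure
        {((3 : ℕ), (0 : ℕ)), (a₂, 0), (0, 1), (1, d₂), (2, x₂)} :=
      AddSubmonoid.subset_closure (by simp)
    have hg4 : ((1 : ℕ), d₂) ∈ AddSubmonoid.closure
        {((3 : ℕ), (0 : ℕ)), (a₂, 0), (0, 1), (1, d₂), (2, x₂)} :=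
      AddSubmonoid.subset_closure (by simp)
    have hg5 : ((2 : ℕ), x₂) ∈ AddSubmonoid.closure
        {((3 : ℕ), (0 : ℕ)), (a₂, 0), (0, 1), (1, d₂), (2, x₂)} :=
      AddSubmonoid.subset_closure (by simp)
    have key : α • ((3 : ℕ), (0 : ℕ)) + β • ((a₂ : ℕ), (0 : ℕ)) + γ • ((1 : ℕ), d₂)
        + δ • ((2 : ℕ), x₂) + (p.2 - (γ * d₂ + δ * x₂)) • ((0 : ℕ), (1 : ℕ)) = p := by
      have hfst : (α • ((3 : ℕ), (0 : ℕ)) + β • ((a₂ : ℕ), (0 : ℕ)) + γ • ((1 : ℕ), d₂)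
          + δ • ((2 : ℕ), x₂) + (p.2 - (γ * d₂ + δ * x₂)) • ((0 : ℕ), (1 : ℕ))).1
          = α * 3 + β * a₂ + γ * 1 + δ * 2 + (p.2 - (γ * d₂ + δ * x₂)) * 0 := rfl
      have hsnd : (α • ((3 : ℕ), (0 : ℕ)) + β • ((a₂ : ℕ), (0 : ℕ)) + γ • ((1 : ℕ), d₂)
          + δ • ((2 : ℕ), x₂) + (p.2 - (γ * d₂ + δ * x₂)) • ((0 : ℕ), (1 : ℕ))).2
          = α * 0 + β * 0 + γ * d₂ + δ * x₂ + (p.2 - (γ * d₂ + δ * x₂)) * 1 := rfl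
      apply Prod.ext
      · rw [hfst]; linarith [h1]
      · rw [hsnd]
        have : γ * d₂ + δ * x₂ + (p.2 - (γ * d₂ + δ * x₂)) = p.2 := Nat.add_sub_cancel' h2
        linarith [this]
    rw [← key]
    exact add_mem (add_mem (add_mem (add_mem (nsmul_mem hg1 α)
      (nsmul_mem hg2 β)) (nsmul_mem hg4 γ))
      (nsmul_mem hg5 δ)) (nsmul_mem hg3 _)

/-- S = ⟨(3,0),(a₂,0),(0,1),(1,d₂),(2,x₂)⟩ has a unique maximal gap
iff x₂ = d₂. -/
theorem unique_maximal_gap_iff_x2_eq_d2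
    (a₂ d₂ x₂ : ℕ) (hg : Nat.gcd 3 a₂ = 1) (ha : 3 < a₂)
    (hx₂pos : 0 < x₂) (hx₂le : x₂ ≤ d₂)
    (hx : ((2 : ℕ), x₂) ∉ AddSubmonoid.closure {((3 : ℕ), (0 : ℕ)), (a₂, 0), (0, 1), (1, d₂)})
    (S : AddSubmonoid (ℕ × ℕ))
    (hS : S = AddSubmonoid.closure {(3, 0), (a₂, 0), (0, 1), (1, d₂), (2, x₂)})
    (hmin : ∀ B ⊂ ({(3, 0), (a₂, 0), (0, 1), (1, d₂), (2, x₂)} : Set (ℕ × ℕ)),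
      AddSubmonoid.closure B ≠ S) :
    (FA2 S).ncard = 1 ↔ x₂ = d₂ := by
  have hmem : ∀ p : ℕ × ℕ, p ∈ S ↔
      ∃ α β γ δ : ℕ, 3 * α + a₂ * β + γ + 2 * δ = p.1 ∧ γ * d₂ + δ * x₂ ≤ p.2 := by
    intro p; rw [hS]; exact rep_iff_aux a₂ d₂ x₂ p
  clear hS hmin hx
  -- a₂ mod 3 facts
  have ha2mod : a₂ % 3 = 1 ∨ a₂ % 3 = 2 := by
    have h0 : a₂ % 3 ≠ 0 := by
      intro h
      have h3 : (3 : ℕ) ∣ a₂ := Nat.dvd_of_mod_eq_zero h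
      rw [Nat.gcd_eq_left h3] at hg
      omega
    omega
  -- numerical semigroup facts for T = ⟨3, a₂⟩
  have hT2 : ∀ m : ℕ, 2 * a₂ - 3 < m → ∃ α β, 3 * α + a₂ * β = m := by
    intro m hm
    have hm3 : m % 3 = 0 ∨ m % 3 = 1 ∨ m % 3 = 2 := by omega
    rcases ha2mod with h1 | h1 <;> rcases hm3 with h2 | h2 | h2
    · exact ⟨m / 3, 0, by omega⟩
    · exact ⟨(m - a₂) / 3, 1, by omega⟩
    · exact ⟨(m - 2 * a₂) / 3, 2, by omega⟩
    · exact ⟨m / 3, 0, by omega⟩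
    · exact ⟨(m - 2 * a₂) / 3, 2, by omega⟩
    · exact ⟨(m - a₂) / 3, 1, by omega⟩
  have hT1 : ¬ ∃ α β, 3 * α + a₂ * β = 2 * a₂ - 3 := by
    rintro ⟨α, β, h⟩
    rcases Nat.lt_or_ge β 2 with hβ | hβ
    · interval_cases β <;> omega
    · have h2 : a₂ * 2 ≤ a₂ * β := Nat.mul_le_mul_left _ hβ
      have h3 : a₂ * β ≤ 2 * a₂ - 3 := by omega
      omega
  have hT3 : ∃ α β, 3 * α + a₂ * β = 2 * a₂ - 5 := by
    rcases ha2mod with h1 | h1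
    · exact ⟨(2 * a₂ - 5) / 3, 0, by omega⟩
    · exact ⟨(a₂ - 5) / 3, 1, by omega⟩
  -- basic membership consequences
  have hself : ∀ m n : ℕ, (∃ α β, 3 * α + a₂ * β = m) → (m, n) ∈ S := by
    rintro m n ⟨α, β, h⟩
    exact (hmem (m, n)).2 ⟨α, β, 0, 0, by simpa using h, by simp⟩
  have hstep1 : ∀ m n : ℕ, m % 3 = 1 → d₂ ≤ n → (m, n) ∈ S := by
    intro m n h1 h2
    exact (hmem (m, n)).2 ⟨(m - 1) / 3, 0, 1, 0, by simp; omega, by simpa using h2⟩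
  have hstep2 : ∀ m n : ℕ, m % 3 = 2 → x₂ ≤ n → (m, n) ∈ S := by
    intro m n h1 h2
    exact (hmem (m, n)).2 ⟨(m - 2) / 3, 0, 0, 1, by simp; omega, by simpa using h2⟩
  -- bound on gaps
  have hgap : ∀ m n : ℕ, (m, n) ∉ S →
      m ≤ 2 * a₂ - 3 ∧ n < d₂ ∧ ¬ ∃ α β, 3 * α + a₂ * β = m := by
    intro m n h
    have hnotT : ¬ ∃ α β, 3 * α + a₂ * β = m := fun hT => h (hself m n hT)
    refine ⟨?_, ?_, hnotT⟩
    · by_contra hc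
      exact hnotT (hT2 m (by omega))
    · by_contra hc
      have hm3 : m % 3 = 1 ∨ m % 3 = 2 := by
        by_contra hc
        push_neg at hc
        exact hnotT ⟨m / 3, 0, by omega⟩
      rcases hm3 with h0 | h0
      · exact h (hstep1 m n h0 (by omega))
      · exact h (hstep2 m n h0 (by omega))
  -- the Frobenius-like maximal gap, present in all cases
  have hFnot : ∀ n : ℕ, n < x₂ → (2 * a₂ - 3, n) ∉ S := by
    intro n hn hmem'
    obtain ⟨α, β, γ, δ, h1, h2⟩ := (hmem _).1 hmem'
    have hγ : γ = 0 := by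
      by_contra h0
      have : d₂ ≤ γ * d₂ := Nat.le_mul_of_pos_left d₂ (Nat.pos_of_ne_zero h0)
      have : x₂ ≤ γ * d₂ + δ * x₂ := le_trans (le_trans hx₂le this) (Nat.le_add_right _ _)
      omega
    have hδ : δ = 0 := by
      by_contra h0
      have : x₂ ≤ δ * x₂ := Nat.le_mul_of_pos_left x₂ (Nat.pos_of_ne_zero h0)
      have : x₂ ≤ γ * d₂ + δ * x₂ := le_trans this (Nat.le_add_left _ _)
      omega
    subst hγ; subst hδ
    exact hT1 ⟨α, β, by simpa using h1⟩
  have hFmem : ((2 * a₂ - 3, x₂ - 1) : ℕ × ℕ) ∈ FA2 S := by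
    refine ⟨hFnot _ (by omega), ?_⟩
    rintro ⟨m, n⟩ hg' hle
    rw [Prod.mk_le_mk] at hle
    obtain ⟨hb1, hb2, hb3⟩ := hgap m n hg'
    have hm : m = 2 * a₂ - 3 := le_antisymm hb1 hle.1
    have hn : n = x₂ - 1 := by
      by_contra h0
      have hn2 : x₂ ≤ n := by omega
      obtain ⟨α, β, hT⟩ := hT3
      apply hg'
      refine (hmem (m, n)).2 ⟨α, β, 0, 1, ?_, by simpa using hn2⟩
      simp only
      have h2 : a₂ * β ≤ 2 * a₂ - 5 := by omega
      omega
    rw [hm, hn]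
  rcases eq_or_lt_of_le hx₂le with heq | hlt
  · -- x₂ = d₂ : unique maximal gap
    refine ⟨fun _ => heq, fun _ => ?_⟩
    have hset : FA2 S = {(2 * a₂ - 3, x₂ - 1)} := by
      apply Set.eq_singleton_iff_unique_mem.2
      refine ⟨hFmem, ?_⟩
      rintro ⟨m, n⟩ ⟨hns, hmax⟩
      obtain ⟨hb1, hb2, hb3⟩ := hgap m n hns
      have hn : n < x₂ := by
        by_contra h0
        have hn2 : x₂ ≤ n := by omega
        have hm3 : m % 3 = 1 ∨ m % 3 = 2 := by
          by_contra hc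
          exact hb3 ⟨m / 3, 0, by omega⟩
        rcases hm3 with h0' | h0'
        · exact hns (hstep1 m n h0' (by omega))
        · exact hns (hstep2 m n h0' hn2)
      exact (hmax (2 * a₂ - 3, x₂ - 1) (hFnot _ (by omega))
        (Prod.mk_le_mk.2 ⟨hb1, by omega⟩)).symm ▸ rfl
    rw [hset, Set.ncard_singleton]
  · -- x₂ < d₂ : at least two maximal gaps
    refine ⟨fun hcard => ?_, fun h => absurd h (Nat.ne_of_lt hlt)⟩
    exfalso
    -- gaps are finite
    have hgapfin : {p : ℕ × ℕ | p ∉ S}.Finite := by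
      apply Set.Finite.subset (Set.finite_Iic ((2 * a₂ - 3, d₂) : ℕ × ℕ))
      rintro ⟨m, n⟩ hp
      obtain ⟨hb1, hb2, _⟩ := hgap m n hp
      exact Prod.mk_le_mk.2 ⟨hb1, by omega⟩
    -- the gap (1, x₂)
    have hone : ((1 : ℕ), x₂) ∉ S := by
      intro hmem'
      obtain ⟨α, β, γ, δ, h1, h2⟩ := (hmem _).1 hmem'
      have hβ : β = 0 := by
        by_contra h0
        have : a₂ * 1 ≤ a₂ * β := Nat.mul_le_mul_left _ (Nat.pos_of_ne_zero h0)
        omega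
      subst hβ
      simp only [Nat.mul_zero, Nat.add_zero] at h1
      have hγ : γ = 1 ∧ α = 0 ∧ δ = 0 := by omega
      obtain ⟨h3, _, h5⟩ := hγ
      subst h3; subst h5
      simp at h2
      omega
    -- a maximal gap above (1, x₂)
    set G : Set (ℕ × ℕ) := {p : ℕ × ℕ | p ∉ S ∧ ((1 : ℕ), x₂) ≤ p} with hG
    have hGfin : G.Finite := hgapfin.subset fun p hp => hp.1
    have hGne : G.Nonempty := ⟨(1, x₂), hone, le_refl _⟩
    obtain ⟨e₂, he₂, hmax⟩ := Set.Finite.exists_maximalFor id G hGfin hGne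
    have he₂FA : e₂ ∈ FA2 S := by
      refine ⟨he₂.1, fun g hg' hle => ?_⟩
      exact le_antisymm (hmax (j := g) ⟨hg', le_trans he₂.2 hle⟩ hle) hle
    have hne : e₂ ≠ (2 * a₂ - 3, x₂ - 1) := by
      intro h
      have := he₂.2.2
      rw [h] at this
      simp at this
      omega
    have h2 : 1 < (FA2 S).ncard := by
      rw [Set.one_lt_ncard_iff (hgapfin.subset fun p hp => hp.1)]
      exact ⟨e₂, (2 * a₂ - 3, x₂ - 1), he₂FA, hFmem, hne⟩
    omega
end
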